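/- arXiv:1312.3857 — 4 statements merged into one kernel-verified Lean document; each statement's English description precedes it below -/
import Mathlib

section
/- The following generation facts hold in categories of partitions: (i) the four block partition ⊓⊓ belongs to ⟨fat crossing partition⟩; (ii) the fat crossing partition belongs to ⟨pair positioner partition⟩; (iii) for every s ≥ 3, the pair positioner partition belongs to ⟨h_s⟩. -/
/-!
Basic combinatorics of categories of partitions (Banica–Speicher easy quantum groups).

A partition with `k` upper and `l` lower points is encoded as an equivalence
relation (a `Setoid`) on the set `Fin k ⊕ Fin l` of its points; its blocks are
the equivalence classes.
-/

namespace EasyQG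

/-- A partition of `k` upper and `l` lower points into blocks. -/
abbrev Partition (k l : ℕ) : Type := Setoid (Fin k ⊕ Fin l)

/-- The relation "lying in the same block" of a partition. -/
def inSameBlock {k l : ℕ} (p : Partition k l) :
    (Fin k ⊕ Fin l) → (Fin k ⊕ Fin l) → Prop :=
  @Setoid.r _ p

/-- The partition in `P(0,n)` associated to a word: two points lie in the same
block iff they carry the same letter. -/
def ofWord {n : ℕ} (w : Fin n → ℕ) : Partition 0 n :=
  Setoid.ker (Sum.elim Fin.elim0 w)

/-- The partition in `P(0,n)` associated to a word given as a list of letters. -/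
def ofList (w : List ℕ) : Partition 0 w.length :=
  ofWord w.get

/-- The identity partition `|` in `P(1,1)`: one upper point joined to one lower point. -/
def idPartition : Partition 1 1 := ⊤

/-- The pair partition `⊓` in `P(0,2)`: two points in one block. -/
def pairPartition : Partition 0 2 := ⊤

/-- The double singleton `↓⊗↓` in `P(0,2)`: two points in two different blocks. -/
def doubleSingleton : Partition 0 2 := ⊥

/-- The four block partition `⊓⊓` in `P(0,4)`: four points in one block (word `aaaa`). -/
def fourBlock : Partition 0 4 := ⊤

/-- The fat crossing partition in `P(4,4)`, with blocks `{1,2,3',4'}` and `{3,4,1',2'}`. -/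
def fatCross : Partition 4 4 :=
  Setoid.ker (Sum.elim (fun i => decide (i.val < 2)) (fun j => decide (2 ≤ j.val)))

/-- The pair positioner partition in `P(3,3)`, with blocks `{1,2,2',3'}` and `{3,1'}`. -/
def pairPositioner : Partition 3 3 :=
  Setoid.ker (Sum.elim (fun i => decide (i.val < 2)) (fun j => decide (1 ≤ j.val)))

/-- The `s`-mixing partition `h_s ∈ P(0,2s)`, the word `abab…ab` of length `2s`. -/
def sMixing (s : ℕ) : Partition 0 (2 * s) := ofWord (fun i => i.val % 2)

/-- The partition `π_k ∈ P(0,4k)`, the word `a₁…a_k a_k…a₁ a₁…a_k a_k…a₁`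
in `k` distinct letters. -/
def piPartition (k : ℕ) : Partition 0 (4 * k) :=
  ofWord (fun i =>
    if i.val % (2 * k) < k then i.val % (2 * k) else 2 * k - 1 - i.val % (2 * k))

/-- The disjoint sum of two set partitions. -/
def sumSetoid {α β : Type*} (ra : Setoid α) (rb : Setoid β) : Setoid (α ⊕ β) where
  r := Sum.LiftRel (@Setoid.r _ ra) (@Setoid.r _ rb)
  iseqv := by
    constructor
    · intro x
      cases x with
      | inl a => exact Sum.LiftRel.inl (ra.iseqv.refl a)
      | inr b => exact Sum.LiftRel.inr (rb.iseqv.refl b)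
    · intro x y h
      cases h with
      | inl h => exact Sum.LiftRel.inl (ra.iseqv.symm h)
      | inr h => exact Sum.LiftRel.inr (rb.iseqv.symm h)
    · intro x y z h1 h2
      cases h1 with
      | inl h1 => cases h2 with
        | inl h2 => exact Sum.LiftRel.inl (ra.iseqv.trans h1 h2)
      | inr h1 => cases h2 with
        | inr h2 => exact Sum.LiftRel.inr (rb.iseqv.trans h1 h2)

/-- Tensor product (horizontal concatenation) of partitions. -/
def tensor {k l k' l' : ℕ} (p : Partition k l) (q : Partition k' l') :
    Partition (k + k') (l + l') :=
  Setoid.comap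
    (fun x => (Equiv.sumSumSumComm (Fin k) (Fin k') (Fin l) (Fin l'))
      (Sum.map finSumFinEquiv.symm finSumFinEquiv.symm x))
    (sumSetoid p q)

/-- Composition (vertical concatenation) of partitions `p ∈ P(k,l)` and `q ∈ P(l,m)`:
blocks are joined along the `l` middle points, which are then deleted. -/
def comp {k l m : ℕ} (p : Partition k l) (q : Partition l m) : Partition k m :=
  Setoid.comap (Sum.map id Sum.inr)
    (Relation.EqvGen.setoid (fun x y : Fin k ⊕ (Fin l ⊕ Fin m) =>
      (∃ a b, inSameBlock p a b ∧ Sum.map id Sum.inl a = x ∧ Sum.map id Sum.inl b = y) ∨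
      (∃ a b, inSameBlock q a b ∧ Sum.inr a = x ∧ Sum.inr b = y)))

/-- Involution (turning a partition upside down). -/
def involution {k l : ℕ} (p : Partition k l) : Partition l k :=
  Setoid.comap Sum.swap p

/-- Rotation moving the leftmost upper point to the left end of the lower row. -/
def rotUL {k l : ℕ} (p : Partition (k + 1) l) : Partition k (l + 1) :=
  Setoid.comap
    (Sum.elim (fun i => Sum.inl i.succ)
      (fun j => Fin.cases (Sum.inl (0 : Fin (k + 1))) (fun j' => Sum.inr j') j)) p

/-- Rotation moving the leftmost lower point to the left end of the upper row. -/
def rotLU {k l : ℕ} (p : Partition k (l + 1)) : Partition (k + 1) l :=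
  Setoid.comap
    (Sum.elim (fun i => Fin.cases (Sum.inr (0 : Fin (l + 1))) (fun i' => Sum.inl i') i)
      (fun j => Sum.inr j.succ)) p

/-- Rotation moving the rightmost upper point to the right end of the lower row. -/
def rotUR {k l : ℕ} (p : Partition (k + 1) l) : Partition k (l + 1) :=
  Setoid.comap
    (Sum.elim (fun i => Sum.inl i.castSucc)
      (fun j => Fin.lastCases (Sum.inl (Fin.last k)) (fun j' => Sum.inr j') j)) p

/-- Rotation moving the rightmost lower point to the right end of the upper row. -/
def rotRU {k l : ℕ} (p : Partition k (l + 1)) : Partition (k + 1) l :=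
  Setoid.comap
    (Sum.elim (fun i => Fin.lastCases (Sum.inr (Fin.last l)) (fun i' => Sum.inl i') i)
      (fun j => Sum.inr j.castSucc)) p

/-- A category of partitions: a collection of partitions containing the identity
partition and closed under the category operations (tensor product, composition,
involution and the four rotations). -/
structure PartitionCategory where
  mem : Set (Σ k l : ℕ, Partition k l)
  id_mem : ⟨1, 1, idPartition⟩ ∈ mem
  tensor_mem : ∀ {k l k' l' : ℕ} {p : Partition k l} {q : Partition k' l'},
    ⟨k, l, p⟩ ∈ mem → ⟨k', l', q⟩ ∈ mem → ⟨k + k', l + l', tensor p q⟩ ∈ mem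
  comp_mem : ∀ {k l m : ℕ} {p : Partition k l} {q : Partition l m},
    ⟨k, l, p⟩ ∈ mem → ⟨l, m, q⟩ ∈ mem → ⟨k, m, comp p q⟩ ∈ mem
  involution_mem : ∀ {k l : ℕ} {p : Partition k l},
    ⟨k, l, p⟩ ∈ mem → ⟨l, k, involution p⟩ ∈ mem
  rotUL_mem : ∀ {k l : ℕ} {p : Partition (k + 1) l},
    ⟨k + 1, l, p⟩ ∈ mem → ⟨k, l + 1, rotUL p⟩ ∈ mem
  rotLU_mem : ∀ {k l : ℕ} {p : Partition k (l + 1)},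
    ⟨k, l + 1, p⟩ ∈ mem → ⟨k + 1, l, rotLU p⟩ ∈ mem
  rotUR_mem : ∀ {k l : ℕ} {p : Partition (k + 1) l},
    ⟨k + 1, l, p⟩ ∈ mem → ⟨k, l + 1, rotUR p⟩ ∈ mem
  rotRU_mem : ∀ {k l : ℕ} {p : Partition k (l + 1)},
    ⟨k, l + 1, p⟩ ∈ mem → ⟨k + 1, l, rotRU p⟩ ∈ mem

/-- The members of the smallest category of partitions containing `S`
(the category `⟨S⟩` generated by `S`). -/
def generated (S : Set (Σ k l : ℕ, Partition k l)) : Set (Σ k l : ℕ, Partition k l) :=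
  {x | ∀ C : PartitionCategory, S ⊆ C.mem → x ∈ C.mem}

/-- A category of partitions is hyperoctahedral if it contains the four block
partition `⊓⊓` but not the double singleton `↓⊗↓`. -/
def Hyperoctahedral (C : PartitionCategory) : Prop :=
  (⟨0, 4, fourBlock⟩ : Σ k l : ℕ, Partition k l) ∈ C.mem ∧
    (⟨0, 2, doubleSingleton⟩ : Σ k l : ℕ, Partition k l) ∉ C.mem

/-- A category of partitions is group-theoretical if it contains the pair
positioner partition. -/
def GroupTheoretical (C : PartitionCategory) : Prop :=
  (⟨3, 3, pairPositioner⟩ : Σ k l : ℕ, Partition k l) ∈ C.mem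

/-- The generating set `{π_l | 1 ≤ l ≤ k}`. -/
def piUpTo (k : ℕ) : Set (Σ k l : ℕ, Partition k l) :=
  {x | ∃ l : ℕ, 1 ≤ l ∧ l ≤ k ∧ x = ⟨0, 4 * l, piPartition l⟩}

/-- The generating set `{π_l | l ∈ ℕ, l ≥ 1}`. -/
def piAll : Set (Σ k l : ℕ, Partition k l) :=
  {x | ∃ l : ℕ, 1 ≤ l ∧ x = ⟨0, 4 * l, piPartition l⟩}

end EasyQG
namespace EasyQG

/-- Merging the blocks of the points `x` and `y` of a partition. -/
def merge {k l : ℕ} (p : Partition k l) (x y : Fin k ⊕ Fin l) : Partition k l :=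
  Relation.EqvGen.setoid (fun u v => inSameBlock p u v ∨ (u = x ∧ v = y) ∨ (u = y ∧ v = x))

/-- The word `a_{i(1)}^{k(1)} … a_{i(m)}^{k(m)}` determined by a list of
letters with exponents. -/
def expand (blocks : List (ℕ × ℕ)) : List ℕ :=
  (blocks.map fun be => List.replicate be.2 be.1).flatten

/-- The run decomposition of a word: the list of its (letter, exponent) blocks. -/
def runs : List ℕ → List (ℕ × ℕ)
  | [] => []
  | a :: rest =>
    match runs rest with
    | [] => [(a, 1)]
    | (b, e) :: rs => if a = b then (b, e + 1) :: rs else (a, 1) :: (b, e) :: rs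

/-- The single-double leg form associated to a word: every odd exponent is
replaced by `1` and every even exponent by `2`. -/
def sdForm (w : List ℕ) : List ℕ :=
  expand ((runs w).map fun be => (be.1, if Odd be.2 then 1 else 2))

/-- A word is in single-double leg form if all its exponents are `1` or `2`. -/
def IsSingleDoubleLegForm (w : List ℕ) : Prop :=
  ∃ blocks : List (ℕ × ℕ), List.Chain' (fun x y => x.1 ≠ y.1) blocks ∧
    (∀ b ∈ blocks, b.2 = 1 ∨ b.2 = 2) ∧ w = expand blocks

/-- The vertical reflection of a partition: the left-to-right order of the
points is reversed in both rows, keeping the block structure. -/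
def verticalReflect {k l : ℕ} (p : Partition k l) : Partition k l :=
  Setoid.comap (Sum.map Fin.rev Fin.rev) p

/-- `leg [a₁,…,a_k] [X₁,…,X_{k-1}] = a₁ X₁ a₂ X₂ … a_{k-1} X_{k-1} a_k`:
a list of letters interleaved with filler words. -/
def leg : List ℕ → List (List ℕ) → List ℕ
  | [], _ => []
  | [a], _ => [a]
  | a :: rest, Xs => a :: (Xs.headD [] ++ leg rest Xs.tail)

/-- A word contains a W of depth `k` if it can be written as
`Y₁ S_α X_k^α S_β Y₂ S_γ X_k^γ S_δ Y₃`, where `S_α = a₁X₁^α a₂X₂^α…a_k`,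
`S_β = a_k X_{k-1}^β…X₁^β a₁`, `S_γ = a₁X₁^γ…a_k`, `S_δ = a_k X_{k-1}^δ…X₁^δ a₁`
for `k` distinct letters `a₁,…,a_k`, each of which occurs an odd number of
times in each of `S_α`, `S_β`, `S_γ`, `S_δ`. -/
def ContainsW (w : List ℕ) (k : ℕ) : Prop :=
  ∃ (as : List ℕ) (Xa Xb Xc Xd : List (List ℕ)) (Xka Xkc Y1 Y2 Y3 : List ℕ),
    as.length = k ∧ as.Nodup ∧
    Xa.length = k - 1 ∧ Xb.length = k - 1 ∧ Xc.length = k - 1 ∧ Xd.length = k - 1 ∧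
    w = Y1 ++ leg as Xa ++ Xka ++ leg as.reverse Xb ++ Y2 ++
        leg as Xc ++ Xkc ++ leg as.reverse Xd ++ Y3 ∧
    ∀ a ∈ as, Odd ((leg as Xa).count a) ∧ Odd ((leg as.reverse Xb).count a) ∧
      Odd ((leg as Xc).count a) ∧ Odd ((leg as.reverse Xd).count a)

/-- `wdepth w` is the maximal `k` such that some rotated version of the
word `w` contains a W of depth `k`. -/
noncomputable def wdepth (w : List ℕ) : ℕ :=
  sSup {k | ∃ r : ℕ, ContainsW (w.rotate r) k}

end EasyQG

namespace EasyQG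

section Infra

universe u v w

variable {α : Type u} {β : Type v} {γ : Type w} {k l m : ℕ}

theorem ker_comap (f : α → β) (g : β → γ) :
    Setoid.comap f (Setoid.ker g) = Setoid.ker (g ∘ f) := rfl

theorem ker_ext {F : α → β} {G : α → γ} (h : ∀ x y, F x = F y ↔ G x = G y) :
    Setoid.ker F = Setoid.ker G := Setoid.ext h

/-- membership abbreviation -/
abbrev Mem (C : PartitionCategory) {k l : ℕ} (p : Partition k l) : Prop :=
  (⟨k, l, p⟩ : Σ k l : ℕ, Partition k l) ∈ C.mem

theorem Mem.of_eq {C : PartitionCategory} {p q : Partition k l}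
    (h : Mem C p) (e : p = q) : Mem C q := e ▸ h

/-- the base relation generating the composition of two `ker` partitions -/
abbrev kbase (F : Fin k ⊕ Fin l → β) (G : Fin l ⊕ Fin m → γ)
    (x y : Fin k ⊕ (Fin l ⊕ Fin m)) : Prop :=
  (∃ a b, F a = F b ∧ Sum.map id Sum.inl a = x ∧ Sum.map id Sum.inl b = y) ∨
  (∃ a b, G a = G b ∧ Sum.inr a = x ∧ Sum.inr b = y)

theorem comp_kbase (F : Fin k ⊕ Fin l → β) (G : Fin l ⊕ Fin m → γ) :
    comp (Setoid.ker F) (Setoid.ker G) =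
      Setoid.comap (Sum.map id Sum.inr) (Relation.EqvGen.setoid (kbase F G)) := rfl

theorem comp_ker {δ : Type} (F : Fin k ⊕ Fin l → β) (G : Fin l ⊕ Fin m → γ)
    (H : Fin k ⊕ (Fin l ⊕ Fin m) → δ)
    (f : (Fin k ⊕ (Fin l ⊕ Fin m)) → Fin k ⊕ (Fin l ⊕ Fin m))
    (hF : ∀ a b, F a = F b → H (Sum.map id Sum.inl a) = H (Sum.map id Sum.inl b))
    (hG : ∀ a b, G a = G b → H (Sum.inr a) = H (Sum.inr b))
    (h1 : ∀ x, x = f x ∨ kbase F G x (f x) ∨ kbase F G (f x) x)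
    (h2 : ∀ x y, H x = H y → f (f x) = f (f y)) :
    comp (Setoid.ker F) (Setoid.ker G) =
      Setoid.ker (fun x => H (Sum.map id Sum.inr x)) := by
  have step : ∀ x, Relation.EqvGen (kbase F G) x (f x) := by
    intro x
    rcases h1 x with h | h | h
    · exact h ▸ Relation.EqvGen.refl x
    · exact Relation.EqvGen.rel _ _ h
    · exact Relation.EqvGen.symm _ _ (Relation.EqvGen.rel _ _ h)
  have hset : Relation.EqvGen.setoid (kbase F G) = Setoid.ker H := by
    apply Setoid.ext
    intro x y
    constructor
    · intro h
      induction h with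
      | rel a b hab =>
        rcases hab with ⟨a', b', h', ha, hb⟩ | ⟨a', b', h', ha, hb⟩
        · exact ha ▸ hb ▸ hF a' b' h'
        · exact ha ▸ hb ▸ hG a' b' h'
      | refl a => rfl
      | symm a b _ ih => exact ih.symm
      | trans a b c _ _ ih1 ih2 => exact ih1.trans ih2
    · intro h
      refine Relation.EqvGen.trans _ _ _ (Relation.EqvGen.trans _ _ _ (step x)
        (step (f x))) ?_
      rw [h2 x y h]
      exact Relation.EqvGen.symm _ _ (Relation.EqvGen.trans _ _ _ (step y) (step (f y)))
  rw [comp_kbase, hset]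
  rfl

/-- the pair partition lies in every category -/
theorem pair_mem (C : PartitionCategory) : Mem C pairPartition := by
  have h := C.rotUR_mem (k := 0) (l := 1) C.id_mem
  refine Mem.of_eq h ?_
  apply Setoid.ext
  intro x y
  exact ⟨fun _ => trivial, fun _ => trivial⟩

end Infra

section RotLemmas
universe u
variable {k l : ℕ} {γ : Type u}

theorem rotUR_ker (F : Fin (k+1) ⊕ Fin l → γ) :
    rotUR (Setoid.ker F) = Setoid.ker (Sum.elim (fun i : Fin k => F (Sum.inl i.castSucc))
      (fun j : Fin (l+1) => if h : (j : ℕ) < l then F (Sum.inr ⟨j, h⟩)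
        else F (Sum.inl (Fin.last k)))) := by
  unfold rotUR
  rw [ker_comap]
  refine ker_ext fun x y => ?_
  have key : ∀ z : Fin k ⊕ Fin (l+1),
      (F ∘ (Sum.elim (fun i => Sum.inl i.castSucc)
        (fun j => Fin.lastCases (Sum.inl (Fin.last k)) (fun j' => Sum.inr j') j))) z =
      Sum.elim (fun i : Fin k => F (Sum.inl i.castSucc))
        (fun j : Fin (l+1) => if h : (j : ℕ) < l then F (Sum.inr ⟨j, h⟩)
          else F (Sum.inl (Fin.last k))) z := by
    rintro (i | j)
    · rfl
    · induction j using Fin.lastCases with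
      | last => simp
      | cast j' => simp [Fin.eta]
  rw [key x, key y]

theorem rotRU_ker (F : Fin k ⊕ Fin (l+1) → γ) :
    rotRU (Setoid.ker F) = Setoid.ker (Sum.elim
      (fun i : Fin (k+1) => if h : (i : ℕ) < k then F (Sum.inl ⟨i, h⟩)
        else F (Sum.inr (Fin.last l)))
      (fun j : Fin l => F (Sum.inr j.castSucc))) := by
  unfold rotRU
  rw [ker_comap]
  refine ker_ext fun x y => ?_
  have key : ∀ z : Fin (k+1) ⊕ Fin l,
      (F ∘ (Sum.elim (fun i => Fin.lastCases (Sum.inr (Fin.last l)) (fun i' => Sum.inl i') i)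
        (fun j => Sum.inr j.castSucc))) z =
      Sum.elim
        (fun i : Fin (k+1) => if h : (i : ℕ) < k then F (Sum.inl ⟨i, h⟩)
          else F (Sum.inr (Fin.last l)))
        (fun j : Fin l => F (Sum.inr j.castSucc)) z := by
    rintro (i | j)
    · induction i using Fin.lastCases with
      | last => simp
      | cast i' => simp [Fin.eta]
    · rfl
  rw [key x, key y]

end RotLemmas

theorem pair_ker_mem (C : PartitionCategory) :
    Mem C (Setoid.ker (Sum.elim ![] ![0, 0] : Fin 0 ⊕ Fin 2 → ℕ)) := by
  refine Mem.of_eq (pair_mem C) ?_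
  have hall : ∀ a b : Fin 0 ⊕ Fin 2,
      (Sum.elim ![] ![0, 0] : Fin 0 ⊕ Fin 2 → ℕ) a = Sum.elim ![] ![0, 0] b := by decide
  exact Setoid.ext fun a b => ⟨fun _ => hall a b, fun _ => trivial⟩

set_option synthInstance.maxSize 4000 in
set_option maxHeartbeats 1600000 in
theorem part1_aux {C : PartitionCategory} (h0 : Mem C fatCross)
    (hp : Mem C (Setoid.ker (Sum.elim ![] ![0, 0] : Fin 0 ⊕ Fin 2 → ℕ))) :
    Mem C fourBlock := by
  have h1 : Mem C (Setoid.ker (Sum.elim ![] ![0, 0, 1, 1, 0, 0, 1, 1] : Fin 0 ⊕ Fin 8 → ℕ)) := by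
    refine Mem.of_eq (C.rotUL_mem (C.rotUL_mem (C.rotUL_mem (C.rotUL_mem h0)))) ?_
    unfold fatCross rotUL
    simp only [ker_comap]
    exact ker_ext (by decide)
  have h2 : Mem C (Setoid.ker (Sum.elim ![0] ![0, 1, 1, 0, 0, 1, 1] : Fin 1 ⊕ Fin 7 → ℕ)) := by
    refine Mem.of_eq (C.rotLU_mem h1) ?_
    unfold rotLU
    simp only [ker_comap]
    exact ker_ext (by decide)
  have h3 : Mem C (Setoid.ker (Sum.elim ![] ![0, 1, 1, 0, 0, 1, 1, 0] : Fin 0 ⊕ Fin 8 → ℕ)) := by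
    refine Mem.of_eq (C.rotUR_mem h2) ?_
    rw [rotUR_ker]
    exact ker_ext (by decide)
  have h4 : Mem C (Setoid.ker (Sum.elim ![0] ![1, 1, 0, 0, 1, 1, 0] : Fin 1 ⊕ Fin 7 → ℕ)) := by
    refine Mem.of_eq (C.rotLU_mem h3) ?_
    unfold rotLU
    simp only [ker_comap]
    exact ker_ext (by decide)
  have h5 : Mem C (Setoid.ker (Sum.elim ![] ![0, 0, 1, 1, 0, 0, 1, 1] : Fin 0 ⊕ Fin 8 → ℕ)) := by
    refine Mem.of_eq (C.rotUR_mem h4) ?_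
    rw [rotUR_ker]
    exact ker_ext (by decide)
  have h6 : Mem C (Setoid.ker (Sum.elim ![0] ![1, 1, 0, 0, 1, 1, 0] : Fin 1 ⊕ Fin 7 → ℕ)) := by
    refine Mem.of_eq (C.rotRU_mem h5) ?_
    rw [rotRU_ker]
    exact ker_ext (by decide)
  have h7 : Mem C (Setoid.ker (Sum.elim ![0, 0] ![1, 1, 0, 0, 1, 1] : Fin 2 ⊕ Fin 6 → ℕ)) := by
    refine Mem.of_eq (C.rotRU_mem h6) ?_
    rw [rotRU_ker]
    exact ker_ext (by decide)
  have h8 : Mem C (Setoid.ker (Sum.elim ![] ![0, 0, 1, 1, 0, 0] : Fin 0 ⊕ Fin 6 → ℕ)) := by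
    refine Mem.of_eq (C.comp_mem hp h7) ((comp_ker (Sum.elim ![] ![0, 0] : Fin 0 ⊕ Fin 2 → ℕ) (Sum.elim ![0, 0] ![1, 1, 0, 0, 1, 1] : Fin 2 ⊕ Fin 6 → ℕ)
      (Sum.elim ![] (Sum.elim ![0, 0] ![1, 1, 0, 0, 1, 1]) : Fin 0 ⊕ (Fin 2 ⊕ Fin 6) → ℕ)
      (Sum.elim ![] (Sum.elim ![Sum.inr (Sum.inl 0), Sum.inr (Sum.inl 0)] ![Sum.inr (Sum.inr 0), Sum.inr (Sum.inr 0), Sum.inr (Sum.inl 0), Sum.inr (Sum.inl 0), Sum.inr (Sum.inr 0), Sum.inr (Sum.inr 0)]) : Fin 0 ⊕ (Fin 2 ⊕ Fin 6) → Fin 0 ⊕ (Fin 2 ⊕ Fin 6))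
      ?_ ?_ ?_ ?_).trans (ker_ext ?_)) <;> decide
  have h9 : Mem C (Setoid.ker (Sum.elim ![0] ![0, 1, 1, 0, 0] : Fin 1 ⊕ Fin 5 → ℕ)) := by
    refine Mem.of_eq (C.rotLU_mem h8) ?_
    unfold rotLU
    simp only [ker_comap]
    exact ker_ext (by decide)
  have h10 : Mem C (Setoid.ker (Sum.elim ![] ![0, 1, 1, 0, 0, 0] : Fin 0 ⊕ Fin 6 → ℕ)) := by
    refine Mem.of_eq (C.rotUR_mem h9) ?_
    rw [rotUR_ker]
    exact ker_ext (by decide)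
  have h11 : Mem C (Setoid.ker (Sum.elim ![0] ![1, 1, 0, 0, 0] : Fin 1 ⊕ Fin 5 → ℕ)) := by
    refine Mem.of_eq (C.rotLU_mem h10) ?_
    unfold rotLU
    simp only [ker_comap]
    exact ker_ext (by decide)
  have h12 : Mem C (Setoid.ker (Sum.elim ![] ![0, 0, 1, 1, 1, 1] : Fin 0 ⊕ Fin 6 → ℕ)) := by
    refine Mem.of_eq (C.rotUR_mem h11) ?_
    rw [rotUR_ker]
    exact ker_ext (by decide)
  have h13 : Mem C (Setoid.ker (Sum.elim ![0] ![0, 1, 1, 1, 1] : Fin 1 ⊕ Fin 5 → ℕ)) := by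
    refine Mem.of_eq (C.rotLU_mem h12) ?_
    unfold rotLU
    simp only [ker_comap]
    exact ker_ext (by decide)
  have h14 : Mem C (Setoid.ker (Sum.elim ![] ![0, 1, 1, 1, 1, 0] : Fin 0 ⊕ Fin 6 → ℕ)) := by
    refine Mem.of_eq (C.rotUR_mem h13) ?_
    rw [rotUR_ker]
    exact ker_ext (by decide)
  have h15 : Mem C (Setoid.ker (Sum.elim ![0] ![1, 1, 1, 1, 0] : Fin 1 ⊕ Fin 5 → ℕ)) := by
    refine Mem.of_eq (C.rotLU_mem h14) ?_
    unfold rotLU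
    simp only [ker_comap]
    exact ker_ext (by decide)
  have h16 : Mem C (Setoid.ker (Sum.elim ![] ![0, 0, 0, 0, 1, 1] : Fin 0 ⊕ Fin 6 → ℕ)) := by
    refine Mem.of_eq (C.rotUR_mem h15) ?_
    rw [rotUR_ker]
    exact ker_ext (by decide)
  have h17 : Mem C (Setoid.ker (Sum.elim ![0] ![1, 1, 1, 1, 0] : Fin 1 ⊕ Fin 5 → ℕ)) := by
    refine Mem.of_eq (C.rotRU_mem h16) ?_
    rw [rotRU_ker]
    exact ker_ext (by decide)
  have h18 : Mem C (Setoid.ker (Sum.elim ![0, 0] ![1, 1, 1, 1] : Fin 2 ⊕ Fin 4 → ℕ)) := by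
    refine Mem.of_eq (C.rotRU_mem h17) ?_
    rw [rotRU_ker]
    exact ker_ext (by decide)
  have h19 : Mem C (Setoid.ker (Sum.elim ![] ![0, 0, 0, 0] : Fin 0 ⊕ Fin 4 → ℕ)) := by
    refine Mem.of_eq (C.comp_mem hp h18) ((comp_ker (Sum.elim ![] ![0, 0] : Fin 0 ⊕ Fin 2 → ℕ) (Sum.elim ![0, 0] ![1, 1, 1, 1] : Fin 2 ⊕ Fin 4 → ℕ)
      (Sum.elim ![] (Sum.elim ![0, 0] ![1, 1, 1, 1]) : Fin 0 ⊕ (Fin 2 ⊕ Fin 4) → ℕ)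
      (Sum.elim ![] (Sum.elim ![Sum.inr (Sum.inl 0), Sum.inr (Sum.inl 0)] ![Sum.inr (Sum.inr 0), Sum.inr (Sum.inr 0), Sum.inr (Sum.inr 0), Sum.inr (Sum.inr 0)]) : Fin 0 ⊕ (Fin 2 ⊕ Fin 4) → Fin 0 ⊕ (Fin 2 ⊕ Fin 4))
      ?_ ?_ ?_ ?_).trans (ker_ext ?_)) <;> decide
  refine Mem.of_eq h19 ?_
  have hall : ∀ a b : Fin 0 ⊕ Fin 4, (Sum.elim ![] ![0, 0, 0, 0] : Fin 0 ⊕ Fin 4 → ℕ) a = Sum.elim ![] ![0, 0, 0, 0] b := by decide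
  exact Setoid.ext fun a b => ⟨fun _ => trivial, fun _ => hall a b⟩

set_option synthInstance.maxSize 4000 in
set_option maxHeartbeats 1600000 in
theorem part2_aux {C : PartitionCategory} (h0 : Mem C pairPositioner) : Mem C fatCross := by
  have h1 : Mem C (Setoid.ker (Sum.elim ![0, 1] ![0, 1, 0, 0] : Fin 2 ⊕ Fin 4 → ℕ)) := by
    refine Mem.of_eq (C.rotUL_mem h0) ?_
    unfold pairPositioner rotUL
    simp only [ker_comap]
    exact ker_ext (by decide)
  have h2 : Mem C (Setoid.ker (Sum.elim ![0] ![1, 1, 0, 1, 1] : Fin 1 ⊕ Fin 5 → ℕ)) := by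
    refine Mem.of_eq (C.rotUL_mem h1) ?_
    unfold rotUL
    simp only [ker_comap]
    exact ker_ext (by decide)
  have h3 : Mem C (Setoid.ker (Sum.elim ![] ![0, 1, 1, 0, 1, 1] : Fin 0 ⊕ Fin 6 → ℕ)) := by
    refine Mem.of_eq (C.rotUL_mem h2) ?_
    unfold rotUL
    simp only [ker_comap]
    exact ker_ext (by decide)
  have h4 : Mem C (Setoid.ker (Sum.elim ![0] ![1, 1, 0, 1, 1] : Fin 1 ⊕ Fin 5 → ℕ)) := by
    refine Mem.of_eq (C.rotLU_mem h3) ?_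
    unfold rotLU
    simp only [ker_comap]
    exact ker_ext (by decide)
  have h5 : Mem C (Setoid.ker (Sum.elim ![0, 1] ![0, 1, 0, 0] : Fin 2 ⊕ Fin 4 → ℕ)) := by
    refine Mem.of_eq (C.rotLU_mem h4) ?_
    unfold rotLU
    simp only [ker_comap]
    exact ker_ext (by decide)
  have h6 : Mem C (Setoid.ker (Sum.elim ![0] ![1, 0, 0, 1, 0] : Fin 1 ⊕ Fin 5 → ℕ)) := by
    refine Mem.of_eq (C.rotRU_mem h3) ?_
    rw [rotRU_ker]
    exact ker_ext (by decide)
  have h7 : Mem C (Setoid.ker (Sum.elim ![0, 0] ![1, 0, 0, 1] : Fin 2 ⊕ Fin 4 → ℕ)) := by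
    refine Mem.of_eq (C.rotRU_mem h6) ?_
    rw [rotRU_ker]
    exact ker_ext (by decide)
  have h8 : Mem C (Setoid.ker (Sum.elim ![0, 0, 1] ![1, 0, 0] : Fin 3 ⊕ Fin 3 → ℕ)) := by
    refine Mem.of_eq (C.rotRU_mem h7) ?_
    rw [rotRU_ker]
    exact ker_ext (by decide)
  have h9 : Mem C (Setoid.ker (Sum.elim ![0, 0, 1, 0] ![1, 0] : Fin 4 ⊕ Fin 2 → ℕ)) := by
    refine Mem.of_eq (C.rotRU_mem h8) ?_
    rw [rotRU_ker]
    exact ker_ext (by decide)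
  have h10 : Mem C (Setoid.ker (Sum.elim ![0, 0] ![0, 0] : Fin 2 ⊕ Fin 2 → ℕ)) := by
    refine Mem.of_eq (C.comp_mem h5 h9) ((comp_ker (Sum.elim ![0, 1] ![0, 1, 0, 0] : Fin 2 ⊕ Fin 4 → ℕ) (Sum.elim ![0, 0, 1, 0] ![1, 0] : Fin 4 ⊕ Fin 2 → ℕ)
      (Sum.elim ![0, 0] (Sum.elim ![0, 0, 0, 0] ![0, 0]) : Fin 2 ⊕ (Fin 4 ⊕ Fin 2) → ℕ)
      (Sum.elim ![Sum.inr (Sum.inl 0), Sum.inr (Sum.inl 1)] (Sum.elim ![Sum.inr (Sum.inl 0), Sum.inr (Sum.inl 0), Sum.inr (Sum.inl 0), Sum.inr (Sum.inl 0)] ![Sum.inr (Sum.inl 2), Sum.inr (Sum.inl 0)]) : Fin 2 ⊕ (Fin 4 ⊕ Fin 2) → Fin 2 ⊕ (Fin 4 ⊕ Fin 2))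
      ?_ ?_ ?_ ?_).trans (ker_ext ?_)) <;> decide
  have h11 : Mem C (Setoid.ker (Sum.elim ![0] ![0, 0, 0] : Fin 1 ⊕ Fin 3 → ℕ)) := by
    refine Mem.of_eq (C.rotUL_mem h10) ?_
    unfold rotUL
    simp only [ker_comap]
    exact ker_ext (by decide)
  have h12 : Mem C (Setoid.ker (Sum.elim ![] ![0, 0, 0, 0] : Fin 0 ⊕ Fin 4 → ℕ)) := by
    refine Mem.of_eq (C.rotUL_mem h11) ?_
    unfold rotUL
    simp only [ker_comap]
    exact ker_ext (by decide)
  have h13 : Mem C (Setoid.ker (Sum.elim ![0] ![1, 1, 0, 1, 1] : Fin 1 ⊕ Fin 5 → ℕ)) := by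
    refine Mem.of_eq (C.rotLU_mem h3) ?_
    unfold rotLU
    simp only [ker_comap]
    exact ker_ext (by decide)
  have h14 : Mem C (Setoid.ker (Sum.elim ![0, 1] ![0, 1, 0, 0] : Fin 2 ⊕ Fin 4 → ℕ)) := by
    refine Mem.of_eq (C.rotLU_mem h13) ?_
    unfold rotLU
    simp only [ker_comap]
    exact ker_ext (by decide)
  have h15 : Mem C (Setoid.ker (Sum.elim ![0, 0, 1] ![1, 0, 0] : Fin 3 ⊕ Fin 3 → ℕ)) := by
    refine Mem.of_eq (C.rotLU_mem h14) ?_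
    unfold rotLU
    simp only [ker_comap]
    exact ker_ext (by decide)
  have h16 : Mem C (Setoid.ker (Sum.elim ![0, 1, 1, 0] ![1, 1] : Fin 4 ⊕ Fin 2 → ℕ)) := by
    refine Mem.of_eq (C.rotLU_mem h15) ?_
    unfold rotLU
    simp only [ker_comap]
    exact ker_ext (by decide)
  have h17 : Mem C (Setoid.ker (Sum.elim ![0] ![1, 0, 0, 1, 0] : Fin 1 ⊕ Fin 5 → ℕ)) := by
    refine Mem.of_eq (C.rotRU_mem h3) ?_
    rw [rotRU_ker]
    exact ker_ext (by decide)
  have h18 : Mem C (Setoid.ker (Sum.elim ![0, 0] ![1, 0, 0, 1] : Fin 2 ⊕ Fin 4 → ℕ)) := by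
    refine Mem.of_eq (C.rotRU_mem h17) ?_
    rw [rotRU_ker]
    exact ker_ext (by decide)
  have h19 : Mem C (Setoid.ker (Sum.elim ![0, 1, 1, 0] ![2, 1, 1, 2] : Fin 4 ⊕ Fin 4 → ℕ)) := by
    refine Mem.of_eq (C.comp_mem h16 h18) ((comp_ker (Sum.elim ![0, 1, 1, 0] ![1, 1] : Fin 4 ⊕ Fin 2 → ℕ) (Sum.elim ![0, 0] ![1, 0, 0, 1] : Fin 2 ⊕ Fin 4 → ℕ)
      (Sum.elim ![0, 1, 1, 0] (Sum.elim ![1, 1] ![2, 1, 1, 2]) : Fin 4 ⊕ (Fin 2 ⊕ Fin 4) → ℕ)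
      (Sum.elim ![Sum.inl 0, Sum.inl 1, Sum.inl 1, Sum.inl 0] (Sum.elim ![Sum.inl 1, Sum.inl 1] ![Sum.inr (Sum.inr 0), Sum.inr (Sum.inl 0), Sum.inr (Sum.inl 0), Sum.inr (Sum.inr 0)]) : Fin 4 ⊕ (Fin 2 ⊕ Fin 4) → Fin 4 ⊕ (Fin 2 ⊕ Fin 4))
      ?_ ?_ ?_ ?_).trans (ker_ext ?_)) <;> decide
  have h20 : Mem C (Setoid.ker (Sum.elim ![0, 0, 1] ![1, 2, 0, 0, 2] : Fin 3 ⊕ Fin 5 → ℕ)) := by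
    refine Mem.of_eq (C.rotUL_mem h19) ?_
    unfold rotUL
    simp only [ker_comap]
    exact ker_ext (by decide)
  have h21 : Mem C (Setoid.ker (Sum.elim ![0, 1] ![0, 1, 2, 0, 0, 2] : Fin 2 ⊕ Fin 6 → ℕ)) := by
    refine Mem.of_eq (C.rotUL_mem h20) ?_
    unfold rotUL
    simp only [ker_comap]
    exact ker_ext (by decide)
  have h22 : Mem C (Setoid.ker (Sum.elim ![0] ![1, 1, 0, 2, 1, 1, 2] : Fin 1 ⊕ Fin 7 → ℕ)) := by
    refine Mem.of_eq (C.rotUL_mem h21) ?_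
    unfold rotUL
    simp only [ker_comap]
    exact ker_ext (by decide)
  have h23 : Mem C (Setoid.ker (Sum.elim ![] ![0, 1, 1, 0, 2, 1, 1, 2] : Fin 0 ⊕ Fin 8 → ℕ)) := by
    refine Mem.of_eq (C.rotUL_mem h22) ?_
    unfold rotUL
    simp only [ker_comap]
    exact ker_ext (by decide)
  have h24 : Mem C (Setoid.ker (Sum.elim ![0] ![1, 1, 0, 2, 1, 1, 2] : Fin 1 ⊕ Fin 7 → ℕ)) := by
    refine Mem.of_eq (C.rotLU_mem h23) ?_
    unfold rotLU
    simp only [ker_comap]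
    exact ker_ext (by decide)
  have h25 : Mem C (Setoid.ker (Sum.elim ![] ![0, 0, 1, 2, 0, 0, 2, 1] : Fin 0 ⊕ Fin 8 → ℕ)) := by
    refine Mem.of_eq (C.rotUR_mem h24) ?_
    rw [rotUR_ker]
    exact ker_ext (by decide)
  have h26 : Mem C (Setoid.ker (Sum.elim ![0] ![0, 1, 2, 0, 0, 2, 1] : Fin 1 ⊕ Fin 7 → ℕ)) := by
    refine Mem.of_eq (C.rotLU_mem h25) ?_
    unfold rotLU
    simp only [ker_comap]
    exact ker_ext (by decide)
  have h27 : Mem C (Setoid.ker (Sum.elim ![0, 0] ![1, 2, 0, 0, 2, 1] : Fin 2 ⊕ Fin 6 → ℕ)) := by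
    refine Mem.of_eq (C.rotLU_mem h26) ?_
    unfold rotLU
    simp only [ker_comap]
    exact ker_ext (by decide)
  have h28 : Mem C (Setoid.ker (Sum.elim ![0, 1, 1] ![2, 1, 1, 2, 0] : Fin 3 ⊕ Fin 5 → ℕ)) := by
    refine Mem.of_eq (C.rotLU_mem h27) ?_
    unfold rotLU
    simp only [ker_comap]
    exact ker_ext (by decide)
  have h29 : Mem C (Setoid.ker (Sum.elim ![0, 1, 2, 2] ![2, 2, 0, 1] : Fin 4 ⊕ Fin 4 → ℕ)) := by
    refine Mem.of_eq (C.rotLU_mem h28) ?_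
    unfold rotLU
    simp only [ker_comap]
    exact ker_ext (by decide)
  have h30 : Mem C (Setoid.ker (Sum.elim ![0, 1, 2, 0, 0] ![0, 1, 2] : Fin 5 ⊕ Fin 3 → ℕ)) := by
    refine Mem.of_eq (C.rotLU_mem h29) ?_
    unfold rotLU
    simp only [ker_comap]
    exact ker_ext (by decide)
  have h31 : Mem C (Setoid.ker (Sum.elim ![0, 0, 1, 2, 0, 0] ![1, 2] : Fin 6 ⊕ Fin 2 → ℕ)) := by
    refine Mem.of_eq (C.rotLU_mem h30) ?_
    unfold rotLU
    simp only [ker_comap]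
    exact ker_ext (by decide)
  have h32 : Mem C (Setoid.ker (Sum.elim ![0] ![0, 0, 0] : Fin 1 ⊕ Fin 3 → ℕ)) := by
    refine Mem.of_eq (C.rotRU_mem h12) ?_
    rw [rotRU_ker]
    exact ker_ext (by decide)
  have h33 : Mem C (Setoid.ker (Sum.elim ![0, 0] ![0, 0] : Fin 2 ⊕ Fin 2 → ℕ)) := by
    refine Mem.of_eq (C.rotRU_mem h32) ?_
    rw [rotRU_ker]
    exact ker_ext (by decide)
  have h34 : Mem C (Setoid.ker (Sum.elim ![0, 0, 1, 1, 0, 0] ![1, 1] : Fin 6 ⊕ Fin 2 → ℕ)) := by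
    refine Mem.of_eq (C.comp_mem h31 h33) ((comp_ker (Sum.elim ![0, 0, 1, 2, 0, 0] ![1, 2] : Fin 6 ⊕ Fin 2 → ℕ) (Sum.elim ![0, 0] ![0, 0] : Fin 2 ⊕ Fin 2 → ℕ)
      (Sum.elim ![0, 0, 1, 1, 0, 0] (Sum.elim ![1, 1] ![1, 1]) : Fin 6 ⊕ (Fin 2 ⊕ Fin 2) → ℕ)
      (Sum.elim ![Sum.inl 0, Sum.inl 0, Sum.inr (Sum.inl 0), Sum.inr (Sum.inl 1), Sum.inl 0, Sum.inl 0] (Sum.elim ![Sum.inr (Sum.inl 0), Sum.inr (Sum.inl 0)] ![Sum.inr (Sum.inl 0), Sum.inr (Sum.inl 0)]) : Fin 6 ⊕ (Fin 2 ⊕ Fin 2) → Fin 6 ⊕ (Fin 2 ⊕ Fin 2))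
      ?_ ?_ ?_ ?_).trans (ker_ext ?_)) <;> decide
  have h35 : Mem C (Setoid.ker (Sum.elim ![0, 1, 1, 0, 0] ![0, 1, 1] : Fin 5 ⊕ Fin 3 → ℕ)) := by
    refine Mem.of_eq (C.rotUL_mem h34) ?_
    unfold rotUL
    simp only [ker_comap]
    exact ker_ext (by decide)
  have h36 : Mem C (Setoid.ker (Sum.elim ![0, 0, 1, 1] ![1, 1, 0, 0] : Fin 4 ⊕ Fin 4 → ℕ)) := by
    refine Mem.of_eq (C.rotUL_mem h35) ?_
    unfold rotUL
    simp only [ker_comap]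
    exact ker_ext (by decide)
  have h37 : Mem C (Setoid.ker (Sum.elim ![0, 1, 1] ![0, 1, 1, 0, 0] : Fin 3 ⊕ Fin 5 → ℕ)) := by
    refine Mem.of_eq (C.rotUL_mem h36) ?_
    unfold rotUL
    simp only [ker_comap]
    exact ker_ext (by decide)
  have h38 : Mem C (Setoid.ker (Sum.elim ![0, 0] ![1, 1, 0, 0, 1, 1] : Fin 2 ⊕ Fin 6 → ℕ)) := by
    refine Mem.of_eq (C.rotUL_mem h37) ?_
    unfold rotUL
    simp only [ker_comap]
    exact ker_ext (by decide)
  have h39 : Mem C (Setoid.ker (Sum.elim ![0] ![0, 1, 1, 0, 0, 1, 1] : Fin 1 ⊕ Fin 7 → ℕ)) := by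
    refine Mem.of_eq (C.rotUL_mem h38) ?_
    unfold rotUL
    simp only [ker_comap]
    exact ker_ext (by decide)
  have h40 : Mem C (Setoid.ker (Sum.elim ![] ![0, 0, 1, 1, 0, 0, 1, 1] : Fin 0 ⊕ Fin 8 → ℕ)) := by
    refine Mem.of_eq (C.rotUL_mem h39) ?_
    unfold rotUL
    simp only [ker_comap]
    exact ker_ext (by decide)
  have h41 : Mem C (Setoid.ker (Sum.elim ![0] ![0, 1, 1, 0, 0, 1, 1] : Fin 1 ⊕ Fin 7 → ℕ)) := by
    refine Mem.of_eq (C.rotLU_mem h40) ?_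
    unfold rotLU
    simp only [ker_comap]
    exact ker_ext (by decide)
  have h42 : Mem C (Setoid.ker (Sum.elim ![0, 0] ![1, 1, 0, 0, 1, 1] : Fin 2 ⊕ Fin 6 → ℕ)) := by
    refine Mem.of_eq (C.rotLU_mem h41) ?_
    unfold rotLU
    simp only [ker_comap]
    exact ker_ext (by decide)
  have h43 : Mem C (Setoid.ker (Sum.elim ![0, 1, 1] ![0, 1, 1, 0, 0] : Fin 3 ⊕ Fin 5 → ℕ)) := by
    refine Mem.of_eq (C.rotLU_mem h42) ?_
    unfold rotLU
    simp only [ker_comap]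
    exact ker_ext (by decide)
  refine Mem.of_eq (C.rotLU_mem h43) ?_
  unfold rotLU fatCross
  simp only [ker_comap]
  exact ker_ext (by decide)

section PartIII

variable {C : PartitionCategory}

theorem cast_mem {γ : Type} {k l l' : ℕ} (e : l = l') (F : Fin k ⊕ Fin l → γ)
    (h : Mem C (Setoid.ker F)) :
    Mem C (Setoid.ker (fun x : Fin k ⊕ Fin l' => F (Sum.map id (Fin.cast e.symm) x))) := by
  subst e
  refine Mem.of_eq h (ker_ext fun x y => ?_)
  have key : ∀ z : Fin k ⊕ Fin l, Sum.map id (Fin.cast rfl) z = z := by rintro (i | j) <;> rfl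
  rw [key x, key y]

/-- the coloring of `h_s` after `n` left rotations up -/
def Dw (s n : ℕ) : Fin n ⊕ Fin (2*s - n) → ℕ :=
  Sum.elim (fun i => (n - 1 - i.val) % 2) (fun j => (n + j.val) % 2)

theorem rot_iter {s : ℕ} (h : Mem C (sMixing s)) :
    ∀ n, n ≤ 2*s → Mem C (Setoid.ker (Dw s n)) := by
  intro n
  induction n with
  | zero =>
    intro _
    refine Mem.of_eq h (ker_ext fun x y => ?_)
    have key : ∀ z : Fin 0 ⊕ Fin (2*s),
        (Sum.elim Fin.elim0 (fun i : Fin (2*s) => i.val % 2) : Fin 0 ⊕ Fin (2*s) → ℕ) z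
          = Dw s 0 z := by
      rintro (i | j)
      · exact i.elim0
      · show j.val % 2 = (0 + j.val) % 2
        omega
    rw [key x, key y]
  | succ n ih =>
    intro hn1
    have e : 2*s - n = (2*s - (n+1)) + 1 := by omega
    have h2 := cast_mem e _ (ih (by omega))
    refine Mem.of_eq (C.rotLU_mem h2) ?_
    unfold rotLU
    rw [ker_comap]
    refine ker_ext fun x y => ?_
    have key : ∀ z : Fin (n+1) ⊕ Fin (2*s - (n+1)),
        ((fun x : Fin n ⊕ Fin ((2*s - (n+1)) + 1) => Dw s n (Sum.map id (Fin.cast e.symm) x)) ∘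
          (Sum.elim (fun i => Fin.cases (Sum.inr 0) (fun i' => Sum.inl i') i)
            (fun j => Sum.inr j.succ))) z = Dw s (n+1) z := by
      rintro (i | j)
      · induction i using Fin.cases with
        | zero =>
          show (n + _) % 2 = ((n+1) - 1 - 0) % 2
          simp [Fin.cast, Dw]
        | succ i' =>
          show (n - 1 - i'.val) % 2 = ((n+1) - 1 - (i'.val + 1)) % 2
          omega
      · show (n + (j.val + 1)) % 2 = ((n + 1) + j.val) % 2
        omega
    rw [key x, key y]

end PartIII

section PartIIIb

/-- the coloring of the rotated `h_s` in `P(2s-3, 3)` -/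
def Bw (s : ℕ) : Fin (2*s-3) ⊕ Fin 3 → ℕ :=
  Sum.elim (fun i => i.val % 2) (fun j => (j.val + 1) % 2)

/-- the coloring of the composed partition `r ∈ P(3,3)` -/
def Hw (s : ℕ) : Fin 3 ⊕ (Fin (2*s-3) ⊕ Fin 3) → ℕ :=
  Sum.elim (fun i => (i.val + 1) % 2)
    (Sum.elim (fun m => m.val % 2) (fun j => (j.val + 1) % 2))

theorem part3 {C : PartitionCategory} {s : ℕ} (hs : 3 ≤ s) (h : Mem C (sMixing s)) :
    Mem C pairPositioner := by
  -- the rotated `h_s`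
  have hp0 := rot_iter h (2*s-3) (by omega)
  have e3 : 2*s - (2*s-3) = 3 := by omega
  have hB : Mem C (Setoid.ker (Bw s)) := by
    refine Mem.of_eq (cast_mem e3 _ hp0) (ker_ext fun x y => ?_)
    have key : ∀ z : Fin (2*s-3) ⊕ Fin 3,
        Dw s (2*s-3) (Sum.map id (Fin.cast e3.symm) z) = Bw s z := by
      rintro (i | j)
      · show ((2*s-3) - 1 - i.val) % 2 = i.val % 2
        have := i.isLt
        omega
      · show ((2*s-3) + (Fin.cast e3.symm j).val) % 2 = (j.val + 1) % 2
        have : (Fin.cast e3.symm j).val = j.val := rfl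
        rw [this]
        omega
    rw [key x, key y]
  -- its involution
  have hF : Mem C (Setoid.ker (Bw s ∘ Sum.swap)) := by
    refine Mem.of_eq (C.involution_mem hB) ?_
    unfold involution
    rw [ker_comap]
  -- the composition r = (involution p0) ∘ p0
  have hlt : ∀ c : ℕ, c % 2 < 2*s - 3 := fun c => by omega
  have hcomp := C.comp_mem hF hB
  have hR : Mem C (Setoid.ker (Sum.elim ![1,0,1] ![1,0,1] : Fin 3 ⊕ Fin 3 → ℕ)) := by
    refine Mem.of_eq hcomp ?_
    rw [comp_ker (Bw s ∘ Sum.swap) (Bw s) (Hw s)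
      (fun x => Sum.inr (Sum.inl ⟨Hw s x % 2, hlt (Hw s x)⟩))
      ?_ ?_ ?_ ?_]
    · refine ker_ext fun x y => ?_
      have key : ∀ z : Fin 3 ⊕ Fin 3,
          Hw s (Sum.map id Sum.inr z) = (Sum.elim ![1,0,1] ![1,0,1] : Fin 3 ⊕ Fin 3 → ℕ) z := by
        rintro (i | j)
        · fin_cases i <;> rfl
        · fin_cases j <;> rfl
      rw [key x, key y]
    · -- hF : F-edges preserve Hw
      have he : ∀ a : Fin 3 ⊕ Fin (2*s-3), Hw s (Sum.map id Sum.inl a) = (Bw s ∘ Sum.swap) a := by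
        rintro (i | m) <;> rfl
      intro a b hab
      rw [he a, he b]; exact hab
    · have he : ∀ a : Fin (2*s-3) ⊕ Fin 3, Hw s (Sum.inr a) = Bw s a := by
        rintro (m | j) <;> rfl
      intro a b hab
      rw [he a, he b]; exact hab
    · -- connectivity to representatives
      rintro (i | (m | j))
      · refine Or.inr (Or.inl (Or.inl ⟨Sum.inl i, Sum.inr ⟨Hw s (Sum.inl i) % 2, hlt _⟩, ?_, rfl, rfl⟩))
        show (i.val + 1) % 2 = (Hw s (Sum.inl i) % 2) % 2
        show (i.val + 1) % 2 = (((i.val + 1) % 2) % 2) % 2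
        omega
      · refine Or.inr (Or.inl (Or.inl ⟨Sum.inr m, Sum.inr ⟨Hw s (Sum.inr (Sum.inl m)) % 2, hlt _⟩, ?_, rfl, rfl⟩))
        show m.val % 2 = ((m.val % 2) % 2) % 2
        omega
      · refine Or.inr (Or.inr (Or.inr ⟨Sum.inl ⟨Hw s (Sum.inr (Sum.inr j)) % 2, hlt _⟩, Sum.inr j, ?_, rfl, rfl⟩))
        show (((j.val + 1) % 2) % 2) % 2 = (j.val + 1) % 2
        omega
    · intro x y hxy
      simp only [hxy]
  -- final rotations
  have h100 : Mem C (Setoid.ker (Sum.elim ![1, 0, 1] ![1, 0, 1] : Fin 3 ⊕ Fin 3 → ℕ)) := hR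
  have h101 : Mem C (Setoid.ker (Sum.elim ![0, 1] ![1, 1, 0, 1] : Fin 2 ⊕ Fin 4 → ℕ)) := by
    refine Mem.of_eq (C.rotUL_mem h100) ?_
    unfold rotUL
    simp only [ker_comap]
    exact ker_ext (by decide)
  have h102 : Mem C (Setoid.ker (Sum.elim ![0] ![1, 0, 0, 1, 0] : Fin 1 ⊕ Fin 5 → ℕ)) := by
    refine Mem.of_eq (C.rotUL_mem h101) ?_
    unfold rotUL
    simp only [ker_comap]
    exact ker_ext (by decide)
  have h103 : Mem C (Setoid.ker (Sum.elim ![] ![0, 1, 0, 0, 1, 0] : Fin 0 ⊕ Fin 6 → ℕ)) := by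
    refine Mem.of_eq (C.rotUL_mem h102) ?_
    unfold rotUL
    simp only [ker_comap]
    exact ker_ext (by decide)
  have h104 : Mem C (Setoid.ker (Sum.elim ![0] ![1, 0, 0, 1, 0] : Fin 1 ⊕ Fin 5 → ℕ)) := by
    refine Mem.of_eq (C.rotLU_mem h103) ?_
    unfold rotLU
    simp only [ker_comap]
    exact ker_ext (by decide)
  have h105 : Mem C (Setoid.ker (Sum.elim ![] ![0, 1, 1, 0, 1, 1] : Fin 0 ⊕ Fin 6 → ℕ)) := by
    refine Mem.of_eq (C.rotUR_mem h104) ?_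
    rw [rotUR_ker]
    exact ker_ext (by decide)
  have h106 : Mem C (Setoid.ker (Sum.elim ![0] ![1, 1, 0, 1, 1] : Fin 1 ⊕ Fin 5 → ℕ)) := by
    refine Mem.of_eq (C.rotLU_mem h105) ?_
    unfold rotLU
    simp only [ker_comap]
    exact ker_ext (by decide)
  have h107 : Mem C (Setoid.ker (Sum.elim ![0, 1] ![0, 1, 0, 0] : Fin 2 ⊕ Fin 4 → ℕ)) := by
    refine Mem.of_eq (C.rotLU_mem h106) ?_
    unfold rotLU
    simp only [ker_comap]
    exact ker_ext (by decide)
  refine Mem.of_eq (C.rotLU_mem h107) ?_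
  unfold rotLU pairPositioner
  simp only [ker_comap]
  exact ker_ext (by decide)

end PartIIIb

theorem statement2 :
    (⟨0, 4, fourBlock⟩ : Σ k l : ℕ, Partition k l) ∈
        generated {(⟨4, 4, fatCross⟩ : Σ k l : ℕ, Partition k l)} ∧
    (⟨4, 4, fatCross⟩ : Σ k l : ℕ, Partition k l) ∈
        generated {(⟨3, 3, pairPositioner⟩ : Σ k l : ℕ, Partition k l)} ∧
    ∀ s : ℕ, 3 ≤ s →
      (⟨3, 3, pairPositioner⟩ : Σ k l : ℕ, Partition k l) ∈
        generated {(⟨0, 2 * s, sMixing s⟩ : Σ k l : ℕ, Partition k l)} := by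
  refine ⟨?_, ?_, ?_⟩
  · intro C hC
    exact part1_aux (hC rfl) (pair_ker_mem C)
  · intro C hC
    exact part2_aux (hC rfl)
  · intro s hs C hC
    exact part3 hs (hC rfl)

end EasyQG
end

section
/- For every k ∈ ℕ, the partition π_k belongs to the category ⟨pair positioner partition⟩. -/
namespace EasyQG

section Aux

/-! ### Generic setoid computations -/

lemma ofWord_congr {n : ℕ} {w w' : Fin n → ℕ}
    (h : ∀ i j, w i = w j ↔ w' i = w' j) : ofWord w = ofWord w' := by
  apply Setoid.ext
  rintro (x | x) (y | y)
  · exact x.elim0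
  · exact x.elim0
  · exact y.elim0
  · exact h x y

/-- Words in a category `C`. -/
abbrev WCn (C : PartitionCategory) (n : ℕ) (w : Fin n → ℕ) : Prop :=
  (⟨0, n, ofWord w⟩ : Σ k l : ℕ, Partition k l) ∈ C.mem

lemma wcn_cast {C : PartitionCategory} {n n' : ℕ} (h : n = n')
    {w : Fin n → ℕ} {w' : Fin n' → ℕ}
    (hw : ∀ i : Fin n', w' i = w (Fin.cast h.symm i)) :
    WCn C n w → WCn C n' w' := by
  subst h
  have : w' = w := funext fun i => hw i
  rw [WCn, this]
  exact id

/-- Characterisation of a composition as a kernel. -/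
lemma comp_eq_ker {k l m : ℕ} (p : Partition k l) (q : Partition l m)
    (H : Fin k ⊕ (Fin l ⊕ Fin m) → ℕ)
    (h1 : ∀ a b, inSameBlock p a b →
      H (Sum.map id Sum.inl a) = H (Sum.map id Sum.inl b))
    (h2 : ∀ a b, inSameBlock q a b → H (Sum.inr a) = H (Sum.inr b))
    (h3 : ∀ x y, H x = H y →
      Relation.EqvGen (fun x y : Fin k ⊕ (Fin l ⊕ Fin m) =>
      (∃ a b, inSameBlock p a b ∧ Sum.map id Sum.inl a = x ∧ Sum.map id Sum.inl b = y) ∨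
      (∃ a b, inSameBlock q a b ∧ Sum.inr a = x ∧ Sum.inr b = y)) x y) :
    comp p q = Setoid.ker (fun x => H (Sum.map id Sum.inr x)) := by
  have main : ∀ x y, Relation.EqvGen (fun x y : Fin k ⊕ (Fin l ⊕ Fin m) =>
      (∃ a b, inSameBlock p a b ∧ Sum.map id Sum.inl a = x ∧ Sum.map id Sum.inl b = y) ∨
      (∃ a b, inSameBlock q a b ∧ Sum.inr a = x ∧ Sum.inr b = y)) x y ↔ H x = H y := by
    intro x y
    constructor
    · intro hxy
      induction hxy with
      | rel a b hab =>
        rcases hab with ⟨a', b', hab, rfl, rfl⟩ | ⟨a', b', hab, rfl, rfl⟩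
        · exact h1 a' b' hab
        · exact h2 a' b' hab
      | refl a => rfl
      | symm a b _ ih => exact ih.symm
      | trans a b c _ _ ih1 ih2 => exact ih1.trans ih2
    · exact h3 x y
  apply Setoid.ext
  intro x y
  exact main (Sum.map id Sum.inr x) (Sum.map id Sum.inr y)

end Aux

end EasyQG
namespace EasyQG

section Aux2

variable {C : PartitionCategory}

lemma pair_mem_s3 (C : PartitionCategory) :
    (⟨0, 2, pairPartition⟩ : Σ k l : ℕ, Partition k l) ∈ C.mem := by
  have h := C.rotUR_mem (k := 0) (l := 1) C.id_mem
  have e : rotUR (k := 0) (l := 1) idPartition = pairPartition := by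
    apply Setoid.ext
    intro x y
    constructor
    · intro _; trivial
    · intro _; trivial
  rwa [e] at h

/-- One-step rotation of a word. -/
lemma rot1_eq {n : ℕ} (w : Fin (n+1) → ℕ) (w' : Fin (n+1) → ℕ)
    (hc : ∀ i : Fin n, w' i.castSucc = w i.succ) (hl : w' (Fin.last n) = w 0) :
    rotUR (rotLU (ofWord w)) = ofWord w' := by
  have key : ∀ j : Fin (n+1),
      (Sum.elim Fin.elim0 w)
        ((Sum.elim (fun i => Fin.cases (Sum.inr (0 : Fin (n + 1))) (fun i' => Sum.inl i') i)
          (fun j => Sum.inr j.succ) : Fin 1 ⊕ Fin n → Fin 0 ⊕ Fin (n+1))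
        ((Sum.elim (fun i : Fin 0 => Sum.inl i.castSucc)
          (fun j => Fin.lastCases (Sum.inl (Fin.last 0)) (fun j' => Sum.inr j') j) :
            Fin 0 ⊕ Fin (n+1) → Fin 1 ⊕ Fin n) (Sum.inr j))) = w' j := by
    intro j
    refine Fin.lastCases ?_ ?_ j
    · simp [hl, Fin.last_zero]
    · intro i; simp [hc i]
  apply Setoid.ext
  rintro (x | x) (y | y)
  · exact x.elim0
  · exact x.elim0
  · exact y.elim0
  · show _ = _ ↔ _ = _
    rw [key x, key y]; rfl

lemma rot1_mem {n : ℕ} {w : Fin (n+1) → ℕ} (h : WCn C (n+1) w)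
    (w' : Fin (n+1) → ℕ)
    (hc : ∀ i : Fin n, w' i.castSucc = w i.succ) (hl : w' (Fin.last n) = w 0) :
    WCn C (n+1) w' := by
  have h2 := C.rotUR_mem (C.rotLU_mem (k := 0) (l := n) h)
  rwa [WCn, ← rot1_eq w w' hc hl]

end Aux2

end EasyQG
namespace EasyQG

lemma rot2up_eq {m : ℕ} (w : Fin (m+2) → ℕ) :
    rotLU (rotLU (ofWord w)) = Setoid.ker
      (Sum.elim (fun i : Fin 2 => w ⟨1 - i.val, by omega⟩)
        (fun j : Fin m => w ⟨j.val + 2, by omega⟩)) := by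
  apply Setoid.ext
  rintro (i | j) (i' | j')
  · fin_cases i <;> fin_cases i' <;> exact Iff.rfl
  · fin_cases i <;> exact Iff.rfl
  · fin_cases i' <;> exact Iff.rfl
  · exact Iff.rfl

end EasyQG
namespace EasyQG

lemma cap_eq {m : ℕ} (w : Fin (m+2) → ℕ) (hw : w 0 = w 1) :
    comp pairPartition (rotLU (rotLU (ofWord w))) =
      ofWord (fun j : Fin m => w ⟨j.val + 2, by omega⟩) := by
  rw [rot2up_eq]
  set g : Fin 2 ⊕ Fin m → ℕ :=
    Sum.elim (fun i : Fin 2 => w ⟨1 - i.val, by omega⟩)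
      (fun j : Fin m => w ⟨j.val + 2, by omega⟩) with hg
  refine (comp_eq_ker pairPartition (Setoid.ker g)
    (Sum.elim Fin.elim0 g) ?_ ?_ ?_).trans ?_
  · rintro (a | a) (b | b) _
    · exact a.elim0
    · exact a.elim0
    · exact b.elim0
    · show g (Sum.inl a) = g (Sum.inl b)
      fin_cases a <;> fin_cases b <;> first | rfl | exact hw | exact hw.symm
  · intro a b hab; exact hab
  · rintro (x | x) (y | y) hxy
    · exact x.elim0
    · exact x.elim0
    · exact y.elim0
    · exact Relation.EqvGen.rel _ _ (Or.inr ⟨x, y, hxy, rfl, rfl⟩)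
  · apply Setoid.ext
    rintro (x | x) (y | y)
    · exact x.elim0
    · exact x.elim0
    · exact y.elim0
    · exact Iff.rfl

lemma cap_mem {C : PartitionCategory} {m : ℕ} {w : Fin (m+2) → ℕ}
    (hw : w 0 = w 1) (h : WCn C (m+2) w) :
    WCn C m (fun j : Fin m => w ⟨j.val + 2, by omega⟩) := by
  have h2 := C.comp_mem (pair_mem_s3 C) (C.rotLU_mem (k := 1) (l := m) (C.rotLU_mem (k := 0) (l := m + 1) h))
  rwa [WCn, ← cap_eq w hw]

end EasyQG
namespace EasyQG

lemma ker_congr {α β : Type*} (f g : α → β) (h : ∀ x, f x = g x) :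
    Setoid.ker f = Setoid.ker g := by
  have : f = g := funext h
  rw [this]

lemma rotUL_ker {β : Type*} {k l : ℕ} (v : Fin (k+1) ⊕ Fin l → β) :
    rotUL (Setoid.ker v) = Setoid.ker
      (Sum.elim (fun i : Fin k => v (Sum.inl i.succ))
        (fun j : Fin (l+1) => Fin.cases (v (Sum.inl 0)) (fun j' => v (Sum.inr j')) j)) := by
  have hcomm : ∀ j : Fin (l+1),
      Fin.cases (v (Sum.inl 0)) (fun j' => v (Sum.inr j')) j =
        v (Fin.cases (Sum.inl (0 : Fin (k+1))) (fun j' => Sum.inr j') j) := by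
    intro j
    refine Fin.cases rfl (fun _ => rfl) j
  apply Setoid.ext
  rintro (x | x) (y | y)
  · exact Iff.rfl
  · show _ = _ ↔ _ = _
    simp only [Sum.elim_inl, Sum.elim_inr]
    rw [hcomm y]
  · show _ = _ ↔ _ = _
    simp only [Sum.elim_inl, Sum.elim_inr]
    rw [hcomm x]
  · show _ = _ ↔ _ = _
    simp only [Sum.elim_inl, Sum.elim_inr]
    rw [hcomm x, hcomm y]

lemma rot3down_eq {m : ℕ} (v : Fin 3 ⊕ Fin m → ℕ) (w' : Fin (m+3) → ℕ)
    (h0 : w' 0 = v (Sum.inl 2)) (h1 : w' 1 = v (Sum.inl 1)) (h2 : w' 2 = v (Sum.inl 0))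
    (hr : ∀ j : Fin m, w' ⟨j.val+3, by omega⟩ = v (Sum.inr j)) :
    rotUL (rotUL (rotUL (Setoid.ker v))) = ofWord w' := by
  rw [rotUL_ker, rotUL_ker, rotUL_ker, ofWord]
  refine ker_congr _ _ ?_
  rintro (x | j)
  · exact x.elim0
  · show _ = w' j
    refine Fin.cases ?_ (fun j1 => ?_) j
    · simpa using h0.symm
    · refine Fin.cases ?_ (fun j2 => ?_) j1
      · exact h1.symm
      · refine Fin.cases ?_ (fun j3 => ?_) j2
        · exact h2.symm
        · exact (hr j3).symm

end EasyQG
namespace EasyQG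

lemma rot3up_eq {m : ℕ} (w : Fin (m+3) → ℕ) :
    rotLU (rotLU (rotLU (ofWord w))) = Setoid.ker
      (Sum.elim (fun i : Fin 3 => w ⟨2 - i.val, by omega⟩)
        (fun j : Fin m => w ⟨j.val + 3, by omega⟩)) := by
  apply Setoid.ext
  rintro (i | j) (i' | j')
  · fin_cases i <;> fin_cases i' <;> exact Iff.rfl
  · fin_cases i <;> exact Iff.rfl
  · fin_cases i' <;> exact Iff.rfl
  · exact Iff.rfl

lemma slide_eq {m : ℕ} (w : Fin (m+3) → ℕ) (hw : w 0 = w 1) (w' : Fin (m+3) → ℕ)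
    (h0 : w' 0 = w 2) (h1 : w' 1 = w 0) (h2 : w' 2 = w 0)
    (hr : ∀ j : Fin m, w' ⟨j.val+3, by omega⟩ = w ⟨j.val+3, by omega⟩) :
    rotUL (rotUL (rotUL (comp pairPositioner (rotLU (rotLU (rotLU (ofWord w))))))) =
      ofWord w' := by
  rw [rot3up_eq]
  set g : Fin 3 ⊕ Fin m → ℕ :=
    Sum.elim (fun i : Fin 3 => w ⟨2 - i.val, by omega⟩)
      (fun j : Fin m => w ⟨j.val + 3, by omega⟩) with hg
  set Hup : Fin 3 → ℕ := fun u => if u.val ≤ 1 then w 0 else w 2 with hHup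
  have hcomp : comp pairPositioner (Setoid.ker g) =
      Setoid.ker (fun x : Fin 3 ⊕ Fin m => Sum.elim Hup g (Sum.map id Sum.inr x)) := by
    refine comp_eq_ker pairPositioner (Setoid.ker g) (Sum.elim Hup g) ?_ ?_ ?_
    · rintro (a | a) (b | b) hab <;> fin_cases a <;> fin_cases b <;>
        first
          | rfl
          | exact hw
          | exact hw.symm
          | exact Bool.noConfusion (show false = true from hab)
          | exact Bool.noConfusion (show true = false from hab)
    · intro a b hab; exact hab
    · -- connectivity
      intro x y hxy
      have conn : ∀ u : Fin 3, ∃ c : Fin 3,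
          Relation.EqvGen (fun x y : Fin 3 ⊕ (Fin 3 ⊕ Fin m) =>
            (∃ a b, inSameBlock pairPositioner a b ∧
              Sum.map id Sum.inl a = x ∧ Sum.map id Sum.inl b = y) ∨
            (∃ a b, inSameBlock (Setoid.ker g) a b ∧ Sum.inr a = x ∧ Sum.inr b = y))
            (Sum.inl u) (Sum.inr (Sum.inl c)) ∧
          Sum.elim Hup g (Sum.inr (Sum.inl c)) = Sum.elim Hup g (Sum.inl u) := by
        intro u
        fin_cases u
        · exact ⟨1, Relation.EqvGen.rel _ _
            (Or.inl ⟨Sum.inl 0, Sum.inr 1, rfl, rfl, rfl⟩), hw.symm⟩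
        · exact ⟨1, Relation.EqvGen.rel _ _
            (Or.inl ⟨Sum.inl 1, Sum.inr 1, rfl, rfl, rfl⟩), hw.symm⟩
        · exact ⟨0, Relation.EqvGen.rel _ _
            (Or.inl ⟨Sum.inl 2, Sum.inr 0, rfl, rfl, rfl⟩), rfl⟩
      rcases x with u | c
      · rcases y with u' | c'
        · obtain ⟨c, hcg, hcH⟩ := conn u
          obtain ⟨c', hcg', hcH'⟩ := conn u'
          refine hcg.trans _ _ _ (Relation.EqvGen.trans _ _ _ ?_ hcg'.symm)
          refine Relation.EqvGen.rel _ _ (Or.inr ⟨Sum.inl c, Sum.inl c', ?_, rfl, rfl⟩)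
          show g (Sum.inl c) = g (Sum.inl c')
          calc g (Sum.inl c) = Sum.elim Hup g (Sum.inl u) := hcH
            _ = Sum.elim Hup g (Sum.inl u') := hxy
            _ = g (Sum.inl c') := hcH'.symm
        · obtain ⟨c, hcg, hcH⟩ := conn u
          refine hcg.trans _ _ _ ?_
          refine Relation.EqvGen.rel _ _ (Or.inr ⟨Sum.inl c, c', ?_, rfl, rfl⟩)
          show g (Sum.inl c) = g c'
          calc g (Sum.inl c) = Sum.elim Hup g (Sum.inl u) := hcH
            _ = Sum.elim Hup g (Sum.inr c') := hxy
            _ = g c' := rfl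
      · rcases y with u' | c'
        · obtain ⟨c', hcg', hcH'⟩ := conn u'
          refine Relation.EqvGen.trans _ _ _ ?_ hcg'.symm
          refine Relation.EqvGen.rel _ _ (Or.inr ⟨c, Sum.inl c', ?_, rfl, rfl⟩)
          show g c = g (Sum.inl c')
          calc g c = Sum.elim Hup g (Sum.inr c) := rfl
            _ = Sum.elim Hup g (Sum.inl u') := hxy
            _ = g (Sum.inl c') := hcH'.symm
        · exact Relation.EqvGen.rel _ _ (Or.inr ⟨c, c', hxy, rfl, rfl⟩)
  rw [hcomp]
  refine rot3down_eq _ w' ?_ ?_ ?_ ?_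
  · simpa [Hup] using h0
  · simpa [Hup] using h1
  · simpa [Hup] using h2
  · intro j; simpa [g] using hr j

end EasyQG
namespace EasyQG

variable {C : PartitionCategory}

lemma slide_mem {m : ℕ} {w : Fin (m+3) → ℕ}
    (hpp : (⟨3, 3, pairPositioner⟩ : Σ k l : ℕ, Partition k l) ∈ C.mem)
    (hw : w 0 = w 1) (h : WCn C (m+3) w) (w' : Fin (m+3) → ℕ)
    (h0 : w' 0 = w 2) (h1 : w' 1 = w 0) (h2 : w' 2 = w 0)
    (hr : ∀ j : Fin m, w' ⟨j.val+3, by omega⟩ = w ⟨j.val+3, by omega⟩) :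
    WCn C (m+3) w' := by
  have hq := C.rotLU_mem (k := 2) (l := m)
    (C.rotLU_mem (k := 1) (l := m+1) (C.rotLU_mem (k := 0) (l := m+2) h))
  have h2' := C.rotUL_mem (k := 0) (l := m+2)
    (C.rotUL_mem (k := 1) (l := m+1)
      (C.rotUL_mem (k := 2) (l := m) (C.comp_mem hpp hq)))
  rwa [WCn, ← slide_eq w hw w' h0 h1 h2 hr]

lemma pp_eq_kerN (b : ℕ) :
    pairPositioner = Setoid.ker
      (Sum.elim (fun i : Fin 3 => if i.val < 2 then b else b+1)
        (fun j : Fin 3 => if 1 ≤ j.val then b else b+1)) := by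
  unfold pairPositioner
  apply Setoid.ext
  rintro (i | j) (i' | j') <;>
    [skip; skip; skip; skip] <;>
    first
    | (fin_cases i <;> fin_cases i' <;> simp [pairPositioner, Setoid.ker_def, Function.onFun])
    | (fin_cases i <;> fin_cases j' <;> simp [pairPositioner, Setoid.ker_def, Function.onFun])
    | (fin_cases j <;> fin_cases i' <;> simp [pairPositioner, Setoid.ker_def, Function.onFun])
    | (fin_cases j <;> fin_cases j' <;> simp [pairPositioner, Setoid.ker_def, Function.onFun])

lemma ppword_mem
    (hpp : (⟨3, 3, pairPositioner⟩ : Σ k l : ℕ, Partition k l) ∈ C.mem) (b : ℕ) :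
    WCn C 6 (fun i => [b+1,b,b,b+1,b,b].get i) := by
  have h := C.rotUL_mem (k := 0) (l := 5)
    (C.rotUL_mem (k := 1) (l := 4) (C.rotUL_mem (k := 2) (l := 3) hpp))
  have e : (rotUL (rotUL (rotUL pairPositioner)) : Partition 0 6) =
      ofWord (n := 6) (fun i => [b+1,b,b,b+1,b,b].get i) := by
    rw [pp_eq_kerN b]
    refine rot3down_eq _ _ ?_ ?_ ?_ ?_
    · rfl
    · rfl
    · rfl
    · intro j; fin_cases j <;> rfl
  rwa [WCn, ← e]

end EasyQG
namespace EasyQG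

lemma tensor_ofWord {n n' : ℕ} (u : Fin n → ℕ) (v : Fin n' → ℕ)
    (hd : ∀ i j, u i ≠ v j) :
    tensor (ofWord u) (ofWord v) =
      ofWord (fun x : Fin (n + n') => Sum.elim u v (finSumFinEquiv.symm x)) := by
  apply Setoid.ext
  rintro (x | x) (y | y)
  · exact x.elim0
  · exact x.elim0
  · exact y.elim0
  · show Sum.LiftRel _ _ _ _ ↔ _ = _
    rcases hx : finSumFinEquiv.symm x with a | a <;> rcases hy : finSumFinEquiv.symm y with c | c <;>
      simp only [tensor, Sum.map_inr, hx, hy, Sum.elim_inr, Sum.elim_inl,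
        Equiv.sumSumSumComm_apply, Equiv.sumAssoc_symm_apply_inr_inl, Sum.map_inl,
        Equiv.sumAssoc_symm_apply_inr_inr, Equiv.sumAssoc_apply_inl_inl,
        Equiv.sumAssoc_apply_inl_inr, Equiv.sumAssoc_apply_inr,
        Equiv.sumComm_apply, Sum.swap_inl, Sum.swap_inr, Function.comp_apply,
        Sum.liftRel_inl_inl, Sum.liftRel_inr_inr]
    · exact Iff.rfl
    · exact iff_of_false (fun h => by cases h) (hd a c)
    · exact iff_of_false (fun h => by cases h) fun h => hd c a h.symm
    · exact Iff.rfl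
end EasyQG
namespace EasyQG

/-- Words in a category, list version. -/
abbrev WL (C : PartitionCategory) (l : List ℕ) : Prop := WCn C l.length l.get

variable {C : PartitionCategory}

lemma tensor_memL {u v : List ℕ} (hu : WL C u) (hv : WL C v)
    (hd : ∀ a ∈ u, ∀ c ∈ v, a ≠ c) : WL C (u ++ v) := by
  have hd' : ∀ i j, u.get i ≠ v.get j := by
    intro i j
    refine hd _ ?_ _ ?_
    · rw [List.get_eq_getElem]; exact List.getElem_mem _
    · rw [List.get_eq_getElem]; exact List.getElem_mem _
  have ht := C.tensor_mem hu hv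
  rw [tensor_ofWord u.get v.get hd'] at ht
  have hlen : u.length + v.length = (u ++ v).length := List.length_append.symm
  refine wcn_cast hlen ?_ ht
  intro i
  rcases hj : finSumFinEquiv.symm (Fin.cast hlen.symm i) with a | a
  · have hv1 : Fin.castAdd v.length a = Fin.cast hlen.symm i := by
      rw [← finSumFinEquiv_symm_apply_castAdd] at hj
      exact finSumFinEquiv.symm.injective hj.symm
    have hval : (a : ℕ) = i.val := congrArg Fin.val hv1
    simp only [Sum.elim_inl, List.get_eq_getElem]
    rw [List.getElem_append_left (by omega)]
    congr 1
    omega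
  · have hv1 : Fin.natAdd u.length a = Fin.cast hlen.symm i := by
      rw [← finSumFinEquiv_symm_apply_natAdd] at hj
      exact finSumFinEquiv.symm.injective hj.symm
    have hval : u.length + (a : ℕ) = i.val := congrArg Fin.val hv1
    simp only [Sum.elim_inr, List.get_eq_getElem]
    rw [List.getElem_append_right (by omega)]
    congr 1
    omega

lemma rot1L {x : ℕ} {u : List ℕ} (h : WL C (x :: u)) : WL C (u ++ [x]) := by
  have h1 : WCn C (u.length + 1) (x :: u).get := h
  have h2 : WCn C (u.length+1)
      (fun i : Fin (u.length+1) => if hi : i.val < u.length then u.get ⟨i.val, hi⟩ else x) := by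
    refine rot1_mem h1 _ ?_ ?_
    · intro i
      simp [i.isLt]
    · simp
  refine wcn_cast (by simp) ?_ h2
  intro i
  have hi' : i.val < u.length + 1 := by have := i.isLt; simpa using this
  by_cases hi : i.val < u.length
  · simp only [List.get_eq_getElem, Fin.coe_cast, dif_pos hi]
    exact List.getElem_append_left hi
  · have hieq : i.val = u.length := by omega
    simp only [List.get_eq_getElem, Fin.coe_cast, dif_neg hi]
    rw [List.getElem_append_right (by omega)]
    simp [hieq]

lemma rotL {u v : List ℕ} (h : WL C (u ++ v)) : WL C (v ++ u) := by
  induction u generalizing v with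
  | nil => simpa using h
  | cons x u' ih =>
    have h1 : WL C ((u' ++ v) ++ [x]) := by
      refine rot1L ?_
      simpa using h
    have h2 : WL C (u' ++ (v ++ [x])) := by
      rwa [List.append_assoc] at h1
    have h3 := ih h2
    rwa [List.append_assoc, List.singleton_append] at h3

lemma slideRL {b x : ℕ} {t : List ℕ}
    (hpp : (⟨3, 3, pairPositioner⟩ : Σ k l : ℕ, Partition k l) ∈ C.mem)
    (h : WL C (b :: b :: x :: t)) : WL C (x :: b :: b :: t) := by
  have h1 : WCn C (t.length + 3) (b :: b :: x :: t).get := h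
  refine slide_mem hpp ?_ h1 ((x :: b :: b :: t).get) ?_ ?_ ?_ ?_ <;>
    first
    | rfl
    | (intro j; rfl)

lemma slidePastL {b : ℕ} {u v : List ℕ}
    (hpp : (⟨3, 3, pairPositioner⟩ : Σ k l : ℕ, Partition k l) ∈ C.mem)
    (h : WL C (b :: b :: (u ++ v))) : WL C (u ++ b :: b :: v) := by
  induction u generalizing v with
  | nil => simpa using h
  | cons x u' ih =>
    have h1 : WL C (x :: b :: b :: (u' ++ v)) := slideRL hpp (by simpa using h)
    have h2 : WL C ((b :: b :: (u' ++ v)) ++ [x]) := rot1L h1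
    have h3 : WL C (b :: b :: (u' ++ (v ++ [x]))) := by
      simpa using h2
    have h4 := ih h3
    have h5 : WL C ((u' ++ (b :: b :: v)) ++ [x]) := by
      simpa using h4
    have h6 := rotL h5
    rwa [List.cons_append]

lemma capL {b : ℕ} {u : List ℕ} (h : WL C (b :: b :: u)) : WL C u := by
  have h1 : WCn C (u.length + 2) (b :: b :: u).get := h
  have h2 := cap_mem (w := (b :: b :: u).get) rfl h1
  refine wcn_cast rfl ?_ h2
  intro i
  rfl

end EasyQG
namespace EasyQG

variable {C : PartitionCategory}

/-- The word of `π_k` as a list. -/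
def plist (k : ℕ) : List ℕ :=
  List.range k ++ (List.range k).reverse ++ List.range k ++ (List.range k).reverse

lemma plist_length (k : ℕ) : (plist k).length = 4 * k := by
  simp [plist]; omega

lemma mem_plist_lt {k a : ℕ} (h : a ∈ plist k) : a < k := by
  simp only [plist, List.mem_append, List.mem_reverse, List.mem_range] at h
  rcases h with ((h | h) | h) | h <;> omega

lemma plist_get (k j : ℕ) (hk : 1 ≤ k) (h4 : j < (plist k).length) :
    (plist k).get ⟨j, h4⟩ =
      if j % (2*k) < k then j % (2*k) else 2*k - 1 - j % (2*k) := by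
  have h4' : j < 4 * k := by rwa [plist_length] at h4
  simp only [List.get_eq_getElem, plist]
  by_cases h1 : j < k
  · rw [List.getElem_append_left (by simp; omega), List.getElem_append_left (by simp; omega),
      List.getElem_append_left (by simp; omega), List.getElem_range]
    rw [Nat.mod_eq_of_lt (by omega), if_pos (by omega)]
  · by_cases h2 : j < 2*k
    · rw [List.getElem_append_left (by simp; omega), List.getElem_append_left (by simp; omega),
        List.getElem_append_right (by simp; omega)]
      rw [List.getElem_reverse, List.getElem_range]
      rw [Nat.mod_eq_of_lt (by omega), if_neg (by omega)]
      simp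
      omega
    · by_cases h3 : j < 3*k
      · rw [List.getElem_append_left (by simp; omega),
          List.getElem_append_right (by simp; omega), List.getElem_range]
        have hm : j % (2*k) = j - 2*k := by
          rw [Nat.mod_eq_sub_mod (by omega), Nat.mod_eq_of_lt (by omega)]
        rw [hm, if_pos (by omega)]
        simp
        omega
      · rw [List.getElem_append_right (by simp; omega)]
        rw [List.getElem_reverse, List.getElem_range]
        have hm : j % (2*k) = j - 2*k := by
          rw [Nat.mod_eq_sub_mod (by omega), Nat.mod_eq_of_lt (by omega)]
        rw [hm, if_neg (by omega)]
        simp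
        omega

lemma four_memL
    (hpp : (⟨3, 3, pairPositioner⟩ : Σ k l : ℕ, Partition k l) ∈ C.mem) (b : ℕ) :
    WL C [b, b, b, b] := by
  have h0 : WL C [b+1, b, b, b+1, b, b] := ppword_mem hpp b
  have h1 : WL C [b, b, b+1, b, b, b+1] := by
    have := rot1L (x := b+1) (u := [b, b, b+1, b, b]) h0
    simpa using this
  have h2 : WL C [b+1, b, b, b, b, b+1] := slideRL hpp h1
  have h3 : WL C [b, b, b, b, b+1, b+1] := by
    have := rot1L (x := b+1) (u := [b, b, b, b, b+1]) h2
    simpa using this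
  have h4 : WL C ([b+1, b+1] ++ [b, b, b, b]) :=
    rotL (u := [b, b, b, b]) (v := [b+1, b+1]) h3
  exact capL (b := b+1) h4

lemma step_memL
    (hpp : (⟨3, 3, pairPositioner⟩ : Σ k l : ℕ, Partition k l) ∈ C.mem)
    (k : ℕ) (h : WL C (plist (k+1))) : WL C (plist (k+2)) := by
  set b := k + 1 with hb
  set R := List.range b with hR
  have h1 : WL C (plist b ++ [b, b, b, b]) := by
    refine tensor_memL h (four_memL hpp b) ?_
    intro a ha c hc
    have := mem_plist_lt ha
    simp at hc
    omega
  have h2 : WL C ([b, b] ++ (plist b ++ [b, b])) := by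
    refine rotL (u := plist b ++ [b, b]) (v := [b, b]) ?_
    have e : (plist b ++ [b, b]) ++ [b, b] = plist b ++ [b, b, b, b] := by simp
    rwa [e]
  have h3 : WL C (b :: b :: (R ++ (R.reverse ++ (R ++ (R.reverse ++ [b, b]))))) := by
    have e : [b, b] ++ (plist b ++ [b, b]) =
        b :: b :: (R ++ (R.reverse ++ (R ++ (R.reverse ++ [b, b])))) := by
      simp [plist, hR]
    rwa [e] at h2
  have h4 := slidePastL hpp h3
  have h5 : WL C ([b, b] ++ (R ++ ([b, b] ++ (R.reverse ++ (R ++ R.reverse))))) := by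
    refine rotL (u := R ++ ([b, b] ++ (R.reverse ++ (R ++ R.reverse)))) (v := [b, b]) ?_
    have e : (R ++ ([b, b] ++ (R.reverse ++ (R ++ R.reverse)))) ++ [b, b] =
        R ++ (b :: b :: (R.reverse ++ (R ++ (R.reverse ++ [b, b])))) := by
      simp
    rwa [e]
  have h6 : WL C (b :: b :: ((R ++ ([b, b] ++ (R.reverse ++ R))) ++ R.reverse)) := by
    have e : [b, b] ++ (R ++ ([b, b] ++ (R.reverse ++ (R ++ R.reverse)))) =
        b :: b :: ((R ++ ([b, b] ++ (R.reverse ++ R))) ++ R.reverse) := by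
      simp
    rwa [e] at h5
  have h7 := slidePastL hpp h6
  have e : (R ++ ([b, b] ++ (R.reverse ++ R))) ++ (b :: b :: R.reverse) = plist (k+2) := by
    have hrange : List.range (k+2) = R ++ [b] := by
      rw [hR, hb]
      simp [List.range_succ]
    simp [plist, hrange]
  rwa [e] at h7

lemma main_memL
    (hpp : (⟨3, 3, pairPositioner⟩ : Σ k l : ℕ, Partition k l) ∈ C.mem)
    (n : ℕ) : WL C (plist (n+1)) := by
  induction n with
  | zero =>
    have e : plist 1 = [0, 0, 0, 0] := by simp [plist, List.range_succ]
    rw [e]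
    exact four_memL hpp 0
  | succ n ih => exact step_memL hpp n ih

end EasyQG
namespace EasyQG

theorem statement3 (k : ℕ) (hk : 1 ≤ k) :
    (⟨0, 4 * k, piPartition k⟩ : Σ k l : ℕ, Partition k l) ∈
      generated {(⟨3, 3, pairPositioner⟩ : Σ k l : ℕ, Partition k l)} := by
  intro C hC
  have hpp : (⟨3, 3, pairPositioner⟩ : Σ k l : ℕ, Partition k l) ∈ C.mem := hC rfl
  obtain ⟨n, rfl⟩ : ∃ n, k = n + 1 := ⟨k - 1, by omega⟩
  have h := main_memL hpp n
  have hlen : (plist (n+1)).length = 4 * (n+1) := plist_length (n+1)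
  rw [piPartition]
  refine wcn_cast hlen ?_ h
  intro i
  have h4 : (i : ℕ) < (plist (n+1)).length := by
    rw [hlen]; exact i.isLt
  exact (plist_get (n+1) i.val (by omega) h4).symm

end EasyQG
end

section
/- Let C be a category of partitions containing the four block partition ⊓⊓, and let p ∈ C. Then the partition p' obtained from p by merging two blocks of p that have at least two neighbouring points (two consecutive points of p lying one in each of the two blocks) again belongs to C. -/
namespace EasyQG

open Relation Sum

section MergeAux

variable {α β : Type*}

private lemma eqvGen_lift (f : α → β) {G : α → α → Prop} {H : β → β → Prop}
    (hf : ∀ a b, G a b → EqvGen H (f a) (f b)) :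
    ∀ a b, EqvGen G a b → EqvGen H (f a) (f b) := by
  intro a b h
  induction h with
  | rel a b h => exact hf a b h
  | refl a => exact .refl _
  | symm _ _ _ ih => exact .symm _ _ ih
  | trans _ _ _ _ _ ih1 ih2 => exact .trans _ _ _ ih1 ih2

private lemma eqvGen_comap_iff (e : α ≃ β) (G : β → β → Prop) (u v : α) :
    EqvGen G (e u) (e v) ↔ EqvGen (fun a b => G (e a) (e b)) u v := by
  constructor
  · intro h
    have := eqvGen_lift (f := e.symm)
      (G := G) (H := fun a b => G (e a) (e b))
      (fun a b hab => .rel _ _ (by simpa using hab)) _ _ h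
    simpa using this
  · intro h
    exact eqvGen_lift (f := e) (fun a b hab => .rel _ _ hab) _ _ h

private lemma comap_comap_symm (e : α ≃ β) (s : Setoid α) :
    Setoid.comap (⇑e) (Setoid.comap (⇑e.symm) s) = s := by
  apply Setoid.ext
  intro a b
  show s (e.symm (e a)) (e.symm (e b)) ↔ s a b
  rw [Equiv.symm_apply_apply, Equiv.symm_apply_apply]

/-- `comap` along an equivalence commutes with `merge`. -/
lemma comap_merge {k l k' l' : ℕ} (e : (Fin k' ⊕ Fin l') ≃ (Fin k ⊕ Fin l))
    (q : Partition k l) (x y : Fin k ⊕ Fin l) :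
    Setoid.comap (⇑e) (merge q x y) = merge (Setoid.comap (⇑e) q) (e.symm x) (e.symm y) := by
  apply Setoid.ext
  intro u v
  show EqvGen _ (e u) (e v) ↔ EqvGen _ u v
  rw [eqvGen_comap_iff e]
  constructor
  · refine fun h => h.mono (fun a b hab => ?_)
    rcases hab with h1 | ⟨h1, h2⟩ | ⟨h1, h2⟩
    · exact Or.inl h1
    · subst h1; subst h2
      exact Or.inr (Or.inl ⟨(Equiv.symm_apply_apply e a).symm, (Equiv.symm_apply_apply e b).symm⟩)
    · subst h1; subst h2
      exact Or.inr (Or.inr ⟨(Equiv.symm_apply_apply e a).symm, (Equiv.symm_apply_apply e b).symm⟩)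
  · refine fun h => h.mono (fun a b hab => ?_)
    rcases hab with h1 | ⟨h1, h2⟩ | ⟨h1, h2⟩
    · exact Or.inl h1
    · subst h1; subst h2
      exact Or.inr (Or.inl ⟨Equiv.apply_symm_apply e x, Equiv.apply_symm_apply e y⟩)
    · subst h1; subst h2
      exact Or.inr (Or.inr ⟨Equiv.apply_symm_apply e y, Equiv.apply_symm_apply e x⟩)

/-- The left rotations as an equivalence of point sets. -/
def rotEquivL (k l : ℕ) : (Fin k ⊕ Fin (l + 1)) ≃ (Fin (k + 1) ⊕ Fin l) where
  toFun := Sum.elim (fun i => Sum.inl i.succ)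
    (fun j => Fin.cases (Sum.inl (0 : Fin (k + 1))) (fun j' => Sum.inr j') j)
  invFun := Sum.elim (fun i => Fin.cases (Sum.inr (0 : Fin (l + 1))) (fun i' => Sum.inl i') i)
    (fun j => Sum.inr j.succ)
  left_inv := by
    rintro (i | j)
    · simp
    · induction j using Fin.cases <;> simp
  right_inv := by
    rintro (i | j)
    · induction i using Fin.cases <;> simp
    · simp

/-- The right rotations as an equivalence of point sets. -/
def rotEquivR (k l : ℕ) : (Fin k ⊕ Fin (l + 1)) ≃ (Fin (k + 1) ⊕ Fin l) where
  toFun := Sum.elim (fun i => Sum.inl i.castSucc)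
    (fun j => Fin.lastCases (Sum.inl (Fin.last k)) (fun j' => Sum.inr j') j)
  invFun := Sum.elim (fun i => Fin.lastCases (Sum.inr (Fin.last l)) (fun i' => Sum.inl i') i)
    (fun j => Sum.inr j.castSucc)
  left_inv := by
    rintro (i | j)
    · simp
    · induction j using Fin.lastCases <;> simp
  right_inv := by
    rintro (i | j)
    · induction i using Fin.lastCases <;> simp
    · simp

lemma rotUL_comap {k l : ℕ} (q : Partition (k + 1) l) :
    rotUL q = Setoid.comap (⇑(rotEquivL k l)) q := rfl

lemma rotLU_comap {k l : ℕ} (p : Partition k (l + 1)) :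
    rotLU p = Setoid.comap (⇑(rotEquivL k l).symm) p := rfl

lemma rotUR_comap {k l : ℕ} (q : Partition (k + 1) l) :
    rotUR q = Setoid.comap (⇑(rotEquivR k l)) q := rfl

lemma rotRU_comap {k l : ℕ} (p : Partition k (l + 1)) :
    rotRU p = Setoid.comap (⇑(rotEquivR k l).symm) p := rfl

lemma rotUL_merge {k l : ℕ} (p : Partition k (l + 1)) (x y : Fin (k + 1) ⊕ Fin l) :
    rotUL (merge (rotLU p) x y)
      = merge p ((rotEquivL k l).symm x) ((rotEquivL k l).symm y) := by
  rw [rotUL_comap, rotLU_comap, comap_merge (rotEquivL k l), comap_comap_symm]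

lemma rotUR_merge {k l : ℕ} (p : Partition k (l + 1)) (x y : Fin (k + 1) ⊕ Fin l) :
    rotUR (merge (rotRU p) x y)
      = merge p ((rotEquivR k l).symm x) ((rotEquivR k l).symm y) := by
  rw [rotUR_comap, rotRU_comap, comap_merge (rotEquivR k l), comap_comap_symm]

/-- Composing with the merger `⊤ ∈ P(2,2)` merges the blocks of the two lower points. -/
lemma comp_top22 {k : ℕ} (q : Partition k 2) :
    comp q (⊤ : Partition 2 2) = merge q (Sum.inr 0) (Sum.inr 1) := by
  apply Setoid.ext
  intro u v
  show EqvGen _ (Sum.map id Sum.inr u) (Sum.map id Sum.inr v) ↔ EqvGen _ u v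
  set R : (Fin k ⊕ (Fin 2 ⊕ Fin 2)) → (Fin k ⊕ (Fin 2 ⊕ Fin 2)) → Prop :=
    fun x y =>
      (∃ a b, inSameBlock q a b ∧ Sum.map id Sum.inl a = x ∧ Sum.map id Sum.inl b = y) ∨
      (∃ a b, inSameBlock (⊤ : Partition 2 2) a b ∧ Sum.inr a = x ∧ Sum.inr b = y) with hR
  set S : (Fin k ⊕ Fin 2) → (Fin k ⊕ Fin 2) → Prop :=
    fun u v => inSameBlock q u v ∨
      (u = Sum.inr 0 ∧ v = Sum.inr 1) ∨ (u = Sum.inr 1 ∧ v = Sum.inr 0) with hS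
  have hfin2 : ∀ c d : Fin 2, EqvGen S (Sum.inr c) (Sum.inr d) := by
    intro c d
    fin_cases c <;> fin_cases d
    · exact .refl _
    · exact .rel _ _ (Or.inr (Or.inl ⟨rfl, rfl⟩))
    · exact .rel _ _ (Or.inr (Or.inr ⟨rfl, rfl⟩))
    · exact .refl _
  constructor
  · intro h
    have key := eqvGen_lift (f := Sum.map id (Sum.elim id id))
      (G := R) (H := S) ?_ _ _ h
    · rcases u with a | b <;> rcases v with a' | b' <;> simpa using key
    · rintro x y (⟨a, b, hab, rfl, rfl⟩ | ⟨a, b, _, rfl, rfl⟩)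
      · have h1 : ∀ z : Fin k ⊕ Fin 2,
            Sum.map id (Sum.elim id id) (Sum.map id Sum.inl z) = z := by
          rintro (z | z) <;> rfl
        rw [h1, h1]
        exact .rel _ _ (Or.inl hab)
      · exact hfin2 _ _
  · intro h
    have hEmbMid : ∀ w : Fin k ⊕ Fin 2,
        EqvGen R (Sum.map id Sum.inr w) (Sum.map id Sum.inl w) := by
      rintro (a | b)
      · exact .refl _
      · exact .rel _ _ (Or.inr ⟨Sum.inr b, Sum.inl b, trivial, rfl, rfl⟩)
    refine eqvGen_lift (f := Sum.map id Sum.inr) (G := S) (H := R) ?_ _ _ h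
    rintro a b (hab | ⟨rfl, rfl⟩ | ⟨rfl, rfl⟩)
    · exact .trans _ _ _ (hEmbMid a) (.trans _ _ _
        (EqvGen.rel _ _ (Or.inl ⟨a, b, hab, rfl, rfl⟩)) (.symm _ _ (hEmbMid b)))
    · exact .rel _ _ (Or.inr ⟨Sum.inr 0, Sum.inr 1, trivial, rfl, rfl⟩)
    · exact .rel _ _ (Or.inr ⟨Sum.inr 1, Sum.inr 0, trivial, rfl, rfl⟩)

end MergeAux

section MergeMem

variable (C : PartitionCategory)

lemma top22_mem (h4 : (⟨0, 4, fourBlock⟩ : Σ k l : ℕ, Partition k l) ∈ C.mem) :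
    (⟨2, 2, (⊤ : Partition 2 2)⟩ : Σ k l : ℕ, Partition k l) ∈ C.mem := by
  have h2 := C.rotLU_mem (C.rotLU_mem (k := 0) (l := 3) h4)
  have e : rotLU (rotLU fourBlock) = (⊤ : Partition 2 2) :=
    Setoid.ext fun a b => ⟨fun _ => trivial, fun _ => trivial⟩
  exact e ▸ h2

lemma merge_last_mem
    (h22 : (⟨2, 2, (⊤ : Partition 2 2)⟩ : Σ k l : ℕ, Partition k l) ∈ C.mem) :
    ∀ (d : ℕ) {k : ℕ} (p : Partition k (d + 2)),
      (⟨k, d + 2, p⟩ : Σ k l : ℕ, Partition k l) ∈ C.mem →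
      (⟨k, d + 2, merge p (Sum.inr ⟨d, by omega⟩) (Sum.inr ⟨d + 1, by omega⟩)⟩ :
        Σ k l : ℕ, Partition k l) ∈ C.mem := by
  intro d
  induction d with
  | zero =>
    intro k p hp
    have h := C.comp_mem hp h22
    rw [comp_top22] at h
    exact h
  | succ d ih =>
    intro k p hp
    have h1 := ih (rotLU p) (C.rotLU_mem hp)
    have h2 := C.rotUL_mem h1
    have e := rotUL_merge (k := k) (l := d + 2) p
      (Sum.inr ⟨d, by omega⟩) (Sum.inr ⟨d + 1, by omega⟩)
    rw [e] at h2
    exact h2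

lemma merge_adjacent_mem
    (h22 : (⟨2, 2, (⊤ : Partition 2 2)⟩ : Σ k l : ℕ, Partition k l) ∈ C.mem) :
    ∀ (m d : ℕ) {k : ℕ} (p : Partition k (d + 2 + m)),
      (⟨k, d + 2 + m, p⟩ : Σ k l : ℕ, Partition k l) ∈ C.mem →
      (⟨k, d + 2 + m, merge p (Sum.inr ⟨d, by omega⟩) (Sum.inr ⟨d + 1, by omega⟩)⟩ :
        Σ k l : ℕ, Partition k l) ∈ C.mem := by
  intro m
  induction m with
  | zero => exact fun d k p hp => merge_last_mem C h22 d p hp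
  | succ m ih =>
    intro d k p hp
    have h1 := ih d (rotRU p) (C.rotRU_mem hp)
    have h2 := C.rotUR_mem h1
    have e := rotUR_merge (k := k) (l := d + 2 + m) p
      (Sum.inr ⟨d, by omega⟩) (Sum.inr ⟨d + 1, by omega⟩)
    rw [e] at h2
    exact h2

end MergeMem

theorem statement4 (C : PartitionCategory)
    (h4 : (⟨0, 4, fourBlock⟩ : Σ k l : ℕ, Partition k l) ∈ C.mem)
    {k l : ℕ} (p : Partition k l) (hp : (⟨k, l, p⟩ : Σ k l : ℕ, Partition k l) ∈ C.mem)
    (i j : Fin l) (hij : i.val + 1 = j.val)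
    (hblocks : ¬ inSameBlock p (Sum.inr i) (Sum.inr j)) :
    (⟨k, l, merge p (Sum.inr i) (Sum.inr j)⟩ : Σ k l : ℕ, Partition k l) ∈ C.mem := by
  obtain ⟨d, m, hd, hm⟩ : ∃ d m, (i : ℕ) = d ∧ l = d + 2 + m :=
    ⟨i, l - i - 2, rfl, by omega⟩
  subst hm
  have hi : i = ⟨d, by omega⟩ := Fin.ext (show (i : ℕ) = d from hd)
  have hj : j = ⟨d + 1, by omega⟩ := Fin.ext (show (j : ℕ) = d + 1 by omega)
  rw [hi, hj]
  exact merge_adjacent_mem C (top22_mem C h4) m d p hp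

end EasyQG
end

section
/- Let C be a category of partitions containing the four block partition ⊓⊓, and let p ∈ P(0,n). Then p ∈ C if and only if the single-double leg form associated to p belongs to C. -/
namespace EasyQG

/-! ### Auxiliary infrastructure -/

section Infra

lemma setoid_top_rel {α : Type*} (x y : α) : (⊤ : Setoid α) x y := by
  rw [Setoid.top_def]; trivial

lemma top_eq_ker_const {α : Type*} (c : ℕ) :
    (⊤ : Setoid α) = Setoid.ker (fun _ => c) :=
  Setoid.ext fun x y => ⟨fun _ => rfl, fun _ => setoid_top_rel x y⟩

lemma comap_ker' {α β γ : Type*} (φ : α → β) (f : β → γ) :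
    Setoid.comap φ (Setoid.ker f) = Setoid.ker (f ∘ φ) := rfl

lemma sumSetoid_ker {α β : Type*} (f : α → ℕ) (g : β → ℕ)
    (h : ∀ x y, f x ≠ g y) :
    sumSetoid (Setoid.ker f) (Setoid.ker g) = Setoid.ker (Sum.elim f g) := by
  apply Setoid.ext
  intro a b
  constructor
  · intro hr
    cases hr with
    | inl hr => exact hr
    | inr hr => exact hr
  · intro hr
    cases a with
    | inl a => cases b with
      | inl b => exact Sum.LiftRel.inl hr
      | inr b => exact absurd hr (h a b)
    | inr a => cases b with
      | inl b => exact absurd hr.symm (h b a)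
      | inr b => exact Sum.LiftRel.inr hr

/-- The canonical colouring of the tensor product of two kernel partitions. -/
def tensorFun {k l k' l' : ℕ} (f : Fin k ⊕ Fin l → ℕ) (g : Fin k' ⊕ Fin l' → ℕ) :
    Fin (k + k') ⊕ Fin (l + l') → ℕ :=
  (Sum.elim f g) ∘ (Equiv.sumSumSumComm (Fin k) (Fin k') (Fin l) (Fin l')) ∘
    (Sum.map finSumFinEquiv.symm finSumFinEquiv.symm)

lemma tensor_ker {k l k' l' : ℕ} (f : Fin k ⊕ Fin l → ℕ) (g : Fin k' ⊕ Fin l' → ℕ)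
    (h : ∀ x y, f x ≠ g y) :
    tensor (Setoid.ker f) (Setoid.ker g) = Setoid.ker (tensorFun f g) := by
  unfold tensor
  rw [sumSetoid_ker f g h]
  rfl

lemma tensorFun_castAdd_l {k l k' l' : ℕ} (f : Fin k ⊕ Fin l → ℕ) (g : Fin k' ⊕ Fin l' → ℕ)
    (a : Fin k) :
    tensorFun f g (Sum.inl (Fin.castAdd k' a)) = f (Sum.inl a) := by
  simp [tensorFun]

lemma tensorFun_natAdd_l {k l k' l' : ℕ} (f : Fin k ⊕ Fin l → ℕ) (g : Fin k' ⊕ Fin l' → ℕ)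
    (a : Fin k') :
    tensorFun f g (Sum.inl (Fin.natAdd k a)) = g (Sum.inl a) := by
  simp [tensorFun]

lemma tensorFun_castAdd_r {k l k' l' : ℕ} (f : Fin k ⊕ Fin l → ℕ) (g : Fin k' ⊕ Fin l' → ℕ)
    (a : Fin l) :
    tensorFun f g (Sum.inr (Fin.castAdd l' a)) = f (Sum.inr a) := by
  simp [tensorFun]

lemma tensorFun_natAdd_r {k l k' l' : ℕ} (f : Fin k ⊕ Fin l → ℕ) (g : Fin k' ⊕ Fin l' → ℕ)
    (a : Fin l') :
    tensorFun f g (Sum.inr (Fin.natAdd l a)) = g (Sum.inr a) := by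
  simp [tensorFun]

lemma tensorFun_inl_lt {k l k' l' : ℕ} (f : Fin k ⊕ Fin l → ℕ) (g : Fin k' ⊕ Fin l' → ℕ)
    (i : Fin (k + k')) (h : i.val < k) :
    tensorFun f g (Sum.inl i) = f (Sum.inl ⟨i.val, h⟩) := by
  have hi : i = Fin.castAdd k' ⟨i.val, h⟩ := by apply Fin.ext; rfl
  conv_lhs => rw [hi]
  exact tensorFun_castAdd_l f g _

lemma tensorFun_inl_ge {k l k' l' : ℕ} (f : Fin k ⊕ Fin l → ℕ) (g : Fin k' ⊕ Fin l' → ℕ)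
    (i : Fin (k + k')) (h : k ≤ i.val) :
    tensorFun f g (Sum.inl i) = g (Sum.inl ⟨i.val - k, by omega⟩) := by
  have hi : i = Fin.natAdd k ⟨i.val - k, by omega⟩ := by apply Fin.ext; simp; omega
  conv_lhs => rw [hi]
  exact tensorFun_natAdd_l f g _

lemma tensorFun_inr_lt {k l k' l' : ℕ} (f : Fin k ⊕ Fin l → ℕ) (g : Fin k' ⊕ Fin l' → ℕ)
    (j : Fin (l + l')) (h : j.val < l) :
    tensorFun f g (Sum.inr j) = f (Sum.inr ⟨j.val, h⟩) := by
  have hj : j = Fin.castAdd l' ⟨j.val, h⟩ := by apply Fin.ext; rfl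
  conv_lhs => rw [hj]
  exact tensorFun_castAdd_r f g _

lemma tensorFun_inr_ge {k l k' l' : ℕ} (f : Fin k ⊕ Fin l → ℕ) (g : Fin k' ⊕ Fin l' → ℕ)
    (j : Fin (l + l')) (h : l ≤ j.val) :
    tensorFun f g (Sum.inr j) = g (Sum.inr ⟨j.val - l, by omega⟩) := by
  have hj : j = Fin.natAdd l ⟨j.val - l, by omega⟩ := by apply Fin.ext; simp; omega
  conv_lhs => rw [hj]
  exact tensorFun_natAdd_r f g _

lemma ker_mem_congr (C : PartitionCategory) {k l k' l' : ℕ} (hk : k = k') (hl : l = l')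
    {f : Fin k ⊕ Fin l → ℕ} {f' : Fin k' ⊕ Fin l' → ℕ}
    (hf : ∀ x : Fin k' ⊕ Fin l',
      f' x = f (Sum.map (Fin.cast hk.symm) (Fin.cast hl.symm) x))
    (h : (⟨k, l, Setoid.ker f⟩ : Σ k l : ℕ, Partition k l) ∈ C.mem) :
    (⟨k', l', Setoid.ker f'⟩ : Σ k l : ℕ, Partition k l) ∈ C.mem := by
  subst hk; subst hl
  have : f' = f := by
    funext x
    rw [hf]
    cases x <;> rfl
  rw [this]
  exact h

end Infra

section Comp0

/-- Composing a word partition `p ∈ P(0,n)` with a kernel partition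
`q ∈ P(n,m)` all of whose lower points are attached to upper points
(via `φ`), such that the upper blocks of `q` refine the letters of `W`,
yields the word partition of `W ∘ φ`. -/
lemma comp_ofWord {n m : ℕ} (W : Fin n → ℕ) (g : Fin n ⊕ Fin m → ℕ) (φ : Fin m → Fin n)
    (hi : ∀ j, g (Sum.inr j) = g (Sum.inl (φ j)))
    (hii : ∀ i i', g (Sum.inl i) = g (Sum.inl i') → W i = W i') :
    comp (ofWord W) (Setoid.ker g) = ofWord (fun j => W (φ j)) := by
  classical
  set R : (Fin 0 ⊕ (Fin n ⊕ Fin m)) → (Fin 0 ⊕ (Fin n ⊕ Fin m)) → Prop :=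
    fun x y =>
      (∃ a b, inSameBlock (ofWord W) a b ∧ Sum.map id Sum.inl a = x ∧
        Sum.map id Sum.inl b = y) ∨
      (∃ a b, inSameBlock (Setoid.ker g) a b ∧ Sum.inr a = x ∧ Sum.inr b = y) with hR
  have K : (Fin 0 ⊕ (Fin n ⊕ Fin m)) → ℕ :=
    Sum.elim (fun x => x.elim0) (Sum.elim W (fun j => W (φ j)))
  set K : (Fin 0 ⊕ (Fin n ⊕ Fin m)) → ℕ :=
    Sum.elim (fun x => x.elim0) (Sum.elim W (fun j => W (φ j))) with hK
  have key : ∀ x y, Relation.EqvGen R x y ↔ K x = K y := by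
    intro x y
    constructor
    · intro h
      induction h with
      | rel a b hab =>
        rcases hab with ⟨a', b', hab, ha, hb⟩ | ⟨a', b', hab, ha, hb⟩
        · subst ha; subst hb
          rcases a' with a' | a'
          · exact a'.elim0
          rcases b' with b' | b'
          · exact b'.elim0
          have : W a' = W b' := hab
          simpa [hK] using this
        · subst ha; subst hb
          have hab' : g a' = g b' := hab
          rcases a' with a' | a' <;> rcases b' with b' | b'
          · simpa [hK] using hii _ _ hab'
          · rw [hi b'] at hab'
            simpa [hK] using hii _ _ hab'
          · rw [hi a'] at hab'
            simpa [hK] using hii _ _ hab'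
          · rw [hi a', hi b'] at hab'
            simpa [hK] using hii _ _ hab'
      | refl a => rfl
      | symm a b _ ih => exact ih.symm
      | trans a b c _ _ ih1 ih2 => exact ih1.trans ih2
    · intro h
      have hlow : ∀ j : Fin m, Relation.EqvGen R (Sum.inr (Sum.inr j))
          (Sum.inr (Sum.inl (φ j))) := by
        intro j
        apply Relation.EqvGen.rel
        right
        exact ⟨Sum.inr j, Sum.inl (φ j), hi j, rfl, rfl⟩
      have hmid : ∀ i i' : Fin n, W i = W i' →
          Relation.EqvGen R (Sum.inr (Sum.inl i)) (Sum.inr (Sum.inl i')) := by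
        intro i i' hw
        apply Relation.EqvGen.rel
        left
        exact ⟨Sum.inr i, Sum.inr i', hw, rfl, rfl⟩
      rcases x with x | x
      · exact x.elim0
      rcases y with y | y
      · exact y.elim0
      rcases x with x | x <;> rcases y with y | y
      · exact hmid _ _ (by simpa [hK] using h)
      · exact Relation.EqvGen.trans _ _ _
          (hmid x (φ y) (by simpa [hK] using h))
          (Relation.EqvGen.symm _ _ (hlow y))
      · exact Relation.EqvGen.trans _ _ _ (hlow x)
          (hmid (φ x) y (by simpa [hK] using h))
      · exact Relation.EqvGen.trans _ _ _ (hlow x)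
          (Relation.EqvGen.trans _ _ _
            (hmid (φ x) (φ y) (by simpa [hK] using h))
            (Relation.EqvGen.symm _ _ (hlow y)))
  apply Setoid.ext
  intro x y
  have : (comp (ofWord W) (Setoid.ker g)) x y ↔
      Relation.EqvGen R (Sum.map id Sum.inr x) (Sum.map id Sum.inr y) := Iff.rfl
  rw [this, key]
  rcases x with x | x
  · exact x.elim0
  rcases y with y | y
  · exact y.elim0
  exact Iff.rfl

end Comp0

section Pad

/-- The cap `∈ P(2,0)` belongs to every category. -/
lemma cap_mem_s6 (C : PartitionCategory) (c : ℕ) :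
    (⟨2, 0, Setoid.ker (fun _ : Fin 2 ⊕ Fin 0 => c)⟩ : Σ k l : ℕ, Partition k l) ∈ C.mem := by
  have h1 := C.rotUL_mem (k := 0) (l := 1) C.id_mem
  have h2 := C.involution_mem h1
  have : involution (rotUL idPartition) = Setoid.ker (fun _ : Fin 2 ⊕ Fin 0 => c) := by
    apply Setoid.ext
    intro x y
    exact ⟨fun _ => rfl, fun _ => setoid_top_rel _ _⟩
  rwa [this] at h2

/-- The one-to-three partition (rotated four block) belongs to `C`. -/
lemma oneThree_mem (C : PartitionCategory)
    (h4 : (⟨0, 4, fourBlock⟩ : Σ k l : ℕ, Partition k l) ∈ C.mem) (c : ℕ) :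
    (⟨1, 3, Setoid.ker (fun _ : Fin 1 ⊕ Fin 3 => c)⟩ : Σ k l : ℕ, Partition k l) ∈ C.mem := by
  have h1 := C.rotLU_mem (k := 0) (l := 3) h4
  have : rotLU fourBlock = Setoid.ker (fun _ : Fin 1 ⊕ Fin 3 => c) := by
    apply Setoid.ext
    intro x y
    exact ⟨fun _ => rfl, fun _ => setoid_top_rel _ _⟩
  rwa [this] at h1

lemma id_ker_mem (C : PartitionCategory) (c : ℕ) :
    (⟨1, 1, Setoid.ker (fun _ : Fin 1 ⊕ Fin 1 => c)⟩ : Σ k l : ℕ, Partition k l) ∈ C.mem := by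
  have h1 := C.id_mem
  have : idPartition = Setoid.ker (fun _ : Fin 1 ⊕ Fin 1 => c) := by
    apply Setoid.ext
    intro x y
    exact ⟨fun _ => rfl, fun _ => setoid_top_rel _ _⟩
  rwa [this] at h1

/-- The colouring of the partition `id^{⊗s} ⊗ q ⊗ id^{⊗t}`, where `q` is the kernel
of a colouring `f0` with values `< b`. -/
def padFun (s t b : ℕ) {n0 m0 : ℕ} (f0 : Fin n0 ⊕ Fin m0 → ℕ) :
    Fin (s + n0 + t) ⊕ Fin (s + m0 + t) → ℕ :=
  Sum.elim
    (fun i => if h1 : i.val < s then i.val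
      else if h2 : i.val < s + n0 then s + f0 (Sum.inl ⟨i.val - s, by omega⟩)
      else s + b + (i.val - s - n0))
    (fun j => if h1 : j.val < s then j.val
      else if h2 : j.val < s + m0 then s + f0 (Sum.inr ⟨j.val - s, by omega⟩)
      else s + b + (j.val - s - m0))

lemma padFun_lt {s t b : ℕ} {n0 m0 : ℕ} {f0 : Fin n0 ⊕ Fin m0 → ℕ}
    (hb : ∀ x, f0 x < b) (x : Fin (s + n0 + t) ⊕ Fin (s + m0 + t)) :
    padFun s t b f0 x < s + b + t := by
  rcases x with i | j
  · simp only [padFun, Sum.elim_inl]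
    split_ifs with h1 h2
    · omega
    · have := hb (Sum.inl (⟨i.val - s, by omega⟩ : Fin n0)); omega
    · have := i.isLt; omega
  · simp only [padFun, Sum.elim_inr]
    split_ifs with h1 h2
    · omega
    · have := hb (Sum.inr (⟨j.val - s, by omega⟩ : Fin m0)); omega
    · have := j.isLt; omega

lemma pad_mem (C : PartitionCategory) {n0 m0 : ℕ} (f0 : Fin n0 ⊕ Fin m0 → ℕ) (b : ℕ)
    (hb : ∀ x, f0 x < b)
    (h0 : (⟨n0, m0, Setoid.ker f0⟩ : Σ k l : ℕ, Partition k l) ∈ C.mem)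
    (s t : ℕ) :
    (⟨s + n0 + t, s + m0 + t, Setoid.ker (padFun s t b f0)⟩ :
      Σ k l : ℕ, Partition k l) ∈ C.mem := by
  -- right extension step
  have stepT : ∀ s t, (⟨s + n0 + t, s + m0 + t, Setoid.ker (padFun s t b f0)⟩ :
      Σ k l : ℕ, Partition k l) ∈ C.mem →
      (⟨s + n0 + (t+1), s + m0 + (t+1), Setoid.ker (padFun s (t+1) b f0)⟩ :
        Σ k l : ℕ, Partition k l) ∈ C.mem := by
    intro s t ih
    have hid := id_ker_mem C (s + b + t)
    have htens := C.tensor_mem ih hid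
    rw [tensor_ker _ _ (fun x y => by
      have := padFun_lt (s := s) (t := t) hb x; omega)] at htens
    refine ker_mem_congr C rfl rfl (fun x => ?_) htens
    rcases x with i | j
    · simp only [Sum.map_inl]
      by_cases h : i.val < s + n0 + t
      · rw [tensorFun_inl_lt _ _ (Fin.cast (by omega) i) (by simpa using h)]
        simp only [padFun, Sum.elim_inl, Fin.coe_cast]
        all_goals split_ifs <;> rfl
      · rw [tensorFun_inl_ge _ _ (Fin.cast (by omega) i) (by simpa using h)]
        have := i.isLt
        simp only [padFun, Sum.elim_inl, Fin.coe_cast]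
        split_ifs <;> omega
    · simp only [Sum.map_inr]
      by_cases h : j.val < s + m0 + t
      · rw [tensorFun_inr_lt _ _ (Fin.cast (by omega) j) (by simpa using h)]
        simp only [padFun, Sum.elim_inr, Fin.coe_cast]
        all_goals split_ifs <;> rfl
      · rw [tensorFun_inr_ge _ _ (Fin.cast (by omega) j) (by simpa using h)]
        have := j.isLt
        simp only [padFun, Sum.elim_inr, Fin.coe_cast]
        split_ifs <;> omega
  -- left extension step
  have stepS : ∀ s t, (⟨s + n0 + t, s + m0 + t, Setoid.ker (padFun s t b f0)⟩ :
      Σ k l : ℕ, Partition k l) ∈ C.mem →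
      (⟨(s+1) + n0 + t, (s+1) + m0 + t, Setoid.ker (padFun (s+1) t b f0)⟩ :
        Σ k l : ℕ, Partition k l) ∈ C.mem := by
    intro s t ih
    have hshift : Setoid.ker (padFun s t b f0) =
        Setoid.ker (fun x => padFun s t b f0 x + 1) := by
      apply Setoid.ext
      intro x y
      constructor
      · intro h; exact congrArg (· + 1) h
      · intro h; exact Nat.succ_injective h
    rw [hshift] at ih
    have hid := id_ker_mem C 0
    have htens := C.tensor_mem hid ih
    rw [tensor_ker _ _ (fun x y => by simp)] at htens
    refine ker_mem_congr C (by omega) (by omega) (fun x => ?_) htens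
    rcases x with i | j
    · simp only [Sum.map_inl]
      by_cases h : i.val < 1
      · rw [tensorFun_inl_lt _ _ (Fin.cast _ i) (by simpa using h)]
        simp only [padFun, Sum.elim_inl]
        split_ifs <;> omega
      · rw [tensorFun_inl_ge _ _ (Fin.cast _ i) (by simp only [Fin.coe_cast]; omega)]
        have := i.isLt
        simp only [padFun, Sum.elim_inl, Fin.coe_cast]
        split_ifs with p1 p2 q1 q2
        · omega
        · omega
        · omega
        · omega
        · have harg : (⟨i.val - 1 - s, by omega⟩ : Fin n0) = ⟨i.val - (s+1), by omega⟩ := by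
            apply Fin.ext; simp; omega
          rw [harg]; omega
        · omega
        · omega
        · omega
        · omega
    · simp only [Sum.map_inr]
      by_cases h : j.val < 1
      · rw [tensorFun_inr_lt _ _ (Fin.cast _ j) (by simpa using h)]
        simp only [padFun, Sum.elim_inr]
        split_ifs <;> omega
      · rw [tensorFun_inr_ge _ _ (Fin.cast _ j) (by simp only [Fin.coe_cast]; omega)]
        have := j.isLt
        simp only [padFun, Sum.elim_inr, Fin.coe_cast]
        split_ifs with p1 p2 q1 q2
        · omega
        · omega
        · omega
        · omega
        · have harg : (⟨j.val - 1 - s, by omega⟩ : Fin m0) = ⟨j.val - (s+1), by omega⟩ := by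
            apply Fin.ext; simp; omega
          rw [harg]; omega
        · omega
        · omega
        · omega
        · omega
  -- base case
  have base : (⟨0 + n0 + 0, 0 + m0 + 0, Setoid.ker (padFun 0 0 b f0)⟩ :
      Σ k l : ℕ, Partition k l) ∈ C.mem := by
    refine ker_mem_congr C (by omega) (by omega) (fun x => ?_) h0
    rcases x with i | j
    · have := i.isLt
      simp only [padFun, Sum.elim_inl, Sum.map_inl]
      split_ifs with h1 h2
      · omega
      · have harg : (⟨i.val - 0, by omega⟩ : Fin n0) = Fin.cast (by omega) i := by
          apply Fin.ext; simp
        rw [harg]; omega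
      · omega
    · have := j.isLt
      simp only [padFun, Sum.elim_inr, Sum.map_inr]
      split_ifs with h1 h2
      · omega
      · have harg : (⟨j.val - 0, by omega⟩ : Fin m0) = Fin.cast (by omega) j := by
          apply Fin.ext; simp
        rw [harg]; omega
      · omega
  induction s with
  | zero =>
    induction t with
    | zero => exact base
    | succ t iht => exact stepT 0 t iht
  | succ s ihs => exact stepS s t ihs

end Pad

section Moves

/-- The insertion map for removing a double leg. -/
def φ1 (s t : ℕ) (j : Fin (s + t)) : Fin (s + 2 + t) :=
  if h : j.val < s then ⟨j.val, by omega⟩ else ⟨j.val + 2, by omega⟩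

lemma φ1_val (s t : ℕ) (j : Fin (s + t)) :
    (φ1 s t j).val = if j.val < s then j.val else j.val + 2 := by
  by_cases h : j.val < s <;> simp [φ1, h]

/-- The insertion map for tripling a leg. -/
def φ2 (s t : ℕ) (j : Fin (s + 3 + t)) : Fin (s + 1 + t) :=
  if h : j.val < s then ⟨j.val, by omega⟩
  else if h2 : j.val ≤ s + 2 then ⟨s, by omega⟩
  else ⟨j.val - 2, by omega⟩

lemma φ2_val (s t : ℕ) (j : Fin (s + 3 + t)) :
    (φ2 s t j).val = if j.val < s then j.val else if j.val ≤ s + 2 then s else j.val - 2 := by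
  by_cases h : j.val < s
  · simp [φ2, h]
  · by_cases h2 : j.val ≤ s + 2 <;> simp [φ2, h, h2]

/-- Removing two adjacent equal letters from a word, word-level version. -/
lemma shrink_word (C : PartitionCategory) (s t : ℕ) (W : Fin (s + 2 + t) → ℕ)
    (hW : W ⟨s, by omega⟩ = W ⟨s + 1, by omega⟩)
    (hp : (⟨0, s + 2 + t, ofWord W⟩ : Σ k l : ℕ, Partition k l) ∈ C.mem) :
    (⟨0, s + t, ofWord (fun j => W (φ1 s t j))⟩ : Σ k l : ℕ, Partition k l) ∈ C.mem := by
  have hq := pad_mem C (fun _ : Fin 2 ⊕ Fin 0 => 0) 1 (fun _ => Nat.zero_lt_one)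
    (cap_mem_s6 C 0) s t
  have hc := C.comp_mem hp hq
  rw [comp_ofWord W _ (φ1 s t) ?hi ?hii] at hc
  · exact hc
  case hi =>
    intro j
    simp only [padFun, Sum.elim_inl, Sum.elim_inr, φ1_val]
    split_ifs <;> omega
  case hii =>
    intro i i' h
    simp only [padFun, Sum.elim_inl] at h
    have hcase : i.val = i'.val ∨ (i.val = s ∧ i'.val = s + 1) ∨
        (i.val = s + 1 ∧ i'.val = s) := by
      split_ifs at h <;> omega
    rcases hcase with hc | ⟨h1, h2⟩ | ⟨h1, h2⟩
    · exact congrArg W (Fin.ext hc)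
    · rw [show i = ⟨s, by omega⟩ from Fin.ext h1,
        show i' = ⟨s + 1, by omega⟩ from Fin.ext h2]
      exact hW
    · rw [show i = ⟨s + 1, by omega⟩ from Fin.ext h1,
        show i' = ⟨s, by omega⟩ from Fin.ext h2]
      exact hW.symm

/-- Tripling a letter of a word, word-level version. -/
lemma grow_word (C : PartitionCategory)
    (h4 : (⟨0, 4, fourBlock⟩ : Σ k l : ℕ, Partition k l) ∈ C.mem)
    (s t : ℕ) (W : Fin (s + 1 + t) → ℕ)
    (hp : (⟨0, s + 1 + t, ofWord W⟩ : Σ k l : ℕ, Partition k l) ∈ C.mem) :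
    (⟨0, s + 3 + t, ofWord (fun j => W (φ2 s t j))⟩ : Σ k l : ℕ, Partition k l) ∈ C.mem := by
  have hq := pad_mem C (fun _ : Fin 1 ⊕ Fin 3 => 0) 1 (fun _ => Nat.zero_lt_one)
    (oneThree_mem C h4 0) s t
  have hc := C.comp_mem hp hq
  rw [comp_ofWord W _ (φ2 s t) ?hi ?hii] at hc
  · exact hc
  case hi =>
    intro j
    simp only [padFun, Sum.elim_inl, Sum.elim_inr, φ2_val]
    split_ifs <;> omega
  case hii =>
    intro i i' h
    simp only [padFun, Sum.elim_inl] at h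
    have hc : i.val = i'.val := by split_ifs at h <;> omega
    exact congrArg W (Fin.ext hc)

/-- Transport between list-words and function-words. -/
lemma ofList_mem_iff_word (C : PartitionCategory) (l : List ℕ) (n : ℕ)
    (hn : l.length = n) (W : Fin n → ℕ)
    (hW : ∀ (j : Fin n) (hj : j.val < l.length), W j = l[j.val]'hj) :
    (⟨0, l.length, ofList l⟩ : Σ k l : ℕ, Partition k l) ∈ C.mem ↔
      (⟨0, n, ofWord W⟩ : Σ k l : ℕ, Partition k l) ∈ C.mem := by
  constructor
  · intro h
    refine ker_mem_congr C rfl hn (fun x => ?_) h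
    rcases x with i | j
    · exact i.elim0
    · simpa using hW j (by rw [hn]; exact j.isLt)
  · intro h
    refine ker_mem_congr C rfl hn.symm (fun x => ?_) h
    rcases x with i | j
    · exact i.elim0
    · have := hW (Fin.cast hn j) (by simpa using j.isLt)
      simp only [Sum.map_inr, Sum.elim_inr]
      rw [List.get_eq_getElem]
      exact (this).symm

/-- Removing two adjacent equal letters from a word. -/
lemma shrink_list (C : PartitionCategory) (u v : List ℕ) (a : ℕ)
    (h : (⟨0, _, ofList (u ++ a :: a :: v)⟩ : Σ k l : ℕ, Partition k l) ∈ C.mem) :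
    (⟨0, _, ofList (u ++ v)⟩ : Σ k l : ℕ, Partition k l) ∈ C.mem := by
  set s := u.length with hs
  set t := v.length with ht
  have hlen : (u ++ a :: a :: v).length = s + 2 + t := by
    simp [List.length_append]; omega
  set W : Fin (s + 2 + t) → ℕ :=
    fun i => (u ++ a :: a :: v)[i.val]'(by rw [hlen]; exact i.isLt) with hWdef
  have hmemW : (⟨0, s + 2 + t, ofWord W⟩ : Σ k l : ℕ, Partition k l) ∈ C.mem := by
    rw [← ofList_mem_iff_word C _ _ hlen W (fun j hj => rfl)]
    exact h
  have hWab : W ⟨s, by omega⟩ = W ⟨s + 1, by omega⟩ := by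
    simp only [hWdef]
    rw [List.getElem_append_right (by omega), List.getElem_append_right (by omega)]
    rw [getElem_congr_idx (show s - u.length = 0 by omega),
      getElem_congr_idx (show s + 1 - u.length = 1 by omega)]
    rfl
  have hres := shrink_word C s t W hWab hmemW
  have hlen2 : (u ++ v).length = s + t := by simp [List.length_append]; rfl
  rw [ofList_mem_iff_word C (u ++ v) (s + t) hlen2 (fun j => W (φ1 s t j)) ?_]
  · exact hres
  · intro j hj
    simp only [hWdef]
    by_cases hc : j.val < s
    · rw [getElem_congr_idx (φ1_val s t j)]
      simp only [hc, if_true]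
      rw [List.getElem_append_left (by omega), List.getElem_append_left (by omega)]
    · rw [getElem_congr_idx (φ1_val s t j)]
      simp only [hc, if_false]
      rw [List.getElem_append_right (show u.length ≤ j.val + 2 by omega),
        List.getElem_append_right (show u.length ≤ j.val by omega)]
      rw [getElem_congr_idx (show j.val + 2 - u.length = (j.val - u.length) + 1 + 1 by omega)]
      rfl

/-- Tripling a letter of a word. -/
lemma grow_list (C : PartitionCategory)
    (h4 : (⟨0, 4, fourBlock⟩ : Σ k l : ℕ, Partition k l) ∈ C.mem)
    (u v : List ℕ) (a : ℕ)
    (h : (⟨0, _, ofList (u ++ a :: v)⟩ : Σ k l : ℕ, Partition k l) ∈ C.mem) :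
    (⟨0, _, ofList (u ++ a :: a :: a :: v)⟩ : Σ k l : ℕ, Partition k l) ∈ C.mem := by
  set s := u.length with hs
  set t := v.length with ht
  have hlen : (u ++ a :: v).length = s + 1 + t := by
    simp [List.length_append]; omega
  set W : Fin (s + 1 + t) → ℕ :=
    fun i => (u ++ a :: v)[i.val]'(by rw [hlen]; exact i.isLt) with hWdef
  have hmemW : (⟨0, s + 1 + t, ofWord W⟩ : Σ k l : ℕ, Partition k l) ∈ C.mem := by
    rw [← ofList_mem_iff_word C _ _ hlen W (fun j hj => rfl)]
    exact h
  have hres := grow_word C h4 s t W hmemW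
  have hlen2 : (u ++ a :: a :: a :: v).length = s + 3 + t := by
    simp [List.length_append]; omega
  rw [ofList_mem_iff_word C _ (s + 3 + t) hlen2 (fun j => W (φ2 s t j)) ?_]
  · exact hres
  · intro j hj
    simp only [hWdef]
    by_cases hc : j.val < s
    · rw [getElem_congr_idx (φ2_val s t j)]
      simp only [hc, if_true]
      rw [List.getElem_append_left (by omega), List.getElem_append_left (by omega)]
    · by_cases hc2 : j.val ≤ s + 2
      · rw [getElem_congr_idx (φ2_val s t j)]
        simp only [hc, hc2, if_false, if_true]
        rw [List.getElem_append_right (show u.length ≤ s by omega),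
          List.getElem_append_right (show u.length ≤ j.val by omega)]
        rw [getElem_congr_idx (show s - u.length = 0 by omega)]
        obtain ⟨c, hcc⟩ : ∃ c, j.val - u.length = c := ⟨_, rfl⟩
        rw [getElem_congr_idx hcc]
        have : c < 3 := by omega
        interval_cases c <;> rfl
      · rw [getElem_congr_idx (φ2_val s t j)]
        simp only [hc, hc2, if_false]
        rw [List.getElem_append_right (show u.length ≤ j.val - 2 by omega),
          List.getElem_append_right (show u.length ≤ j.val by omega)]
        rw [getElem_congr_idx (show j.val - 2 - u.length = (j.val - u.length - 3) + 1 by omega),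
          getElem_congr_idx (show j.val - u.length = (j.val - u.length - 3) + 1 + 1 + 1 by omega)]
        rfl

end Moves

section Words

lemma mem_of_list_eq (C : PartitionCategory) {l l' : List ℕ} (h : l = l') :
    ((⟨0, _, ofList l⟩ : Σ k l : ℕ, Partition k l) ∈ C.mem ↔
      (⟨0, _, ofList l'⟩ : Σ k l : ℕ, Partition k l) ∈ C.mem) := by
  subst h; exact Iff.rfl

lemma triple_iff (C : PartitionCategory)
    (h4 : (⟨0, 4, fourBlock⟩ : Σ k l : ℕ, Partition k l) ∈ C.mem)
    (u v : List ℕ) (a : ℕ) :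
    ((⟨0, _, ofList (u ++ a :: a :: a :: v)⟩ : Σ k l : ℕ, Partition k l) ∈ C.mem ↔
      (⟨0, _, ofList (u ++ a :: v)⟩ : Σ k l : ℕ, Partition k l) ∈ C.mem) :=
  ⟨fun h => shrink_list C u (a :: v) a h, fun h => grow_list C h4 u v a h⟩

lemma expand_cons (a e : ℕ) (bs : List (ℕ × ℕ)) :
    expand ((a, e) :: bs) = List.replicate e a ++ expand bs := by
  simp [expand]

lemma red_run (C : PartitionCategory)
    (h4 : (⟨0, 4, fourBlock⟩ : Σ k l : ℕ, Partition k l) ∈ C.mem) :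
    ∀ e, 1 ≤ e → ∀ (u v : List ℕ) (a : ℕ),
    ((⟨0, _, ofList (u ++ List.replicate e a ++ v)⟩ : Σ k l : ℕ, Partition k l) ∈ C.mem ↔
      (⟨0, _, ofList (u ++ List.replicate (if Odd e then 1 else 2) a ++ v)⟩ :
        Σ k l : ℕ, Partition k l) ∈ C.mem) := by
  intro e
  induction e using Nat.strong_induction_on with
  | _ e ih =>
    intro he u v a
    rcases Nat.lt_or_ge e 3 with h3 | h3
    · interval_cases e
      · rw [if_pos odd_one]
      · rw [if_neg (by simp [Nat.odd_iff])]
    · obtain ⟨e', rfl⟩ : ∃ e', e = e' + 3 := ⟨e - 3, by omega⟩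
      have hrep : List.replicate (e' + 3) a = a :: a :: a :: List.replicate e' a := rfl
      have h1 : u ++ List.replicate (e' + 3) a ++ v =
          u ++ a :: a :: a :: (List.replicate e' a ++ v) := by
        rw [hrep]; simp
      have h2 : u ++ a :: (List.replicate e' a ++ v) =
          u ++ List.replicate (e' + 1) a ++ v := by
        simp [List.replicate_succ]
      have hodd : Odd (e' + 3) ↔ Odd (e' + 1) := by
        rw [Nat.odd_iff, Nat.odd_iff]; omega
      rw [mem_of_list_eq C h1, triple_iff C h4, mem_of_list_eq C h2,
        ih (e' + 1) (by omega) (by omega), if_congr hodd rfl rfl]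

lemma runs_pos : ∀ w : List ℕ, ∀ b ∈ runs w, 1 ≤ b.2 := by
  intro w
  induction w with
  | nil => simp [runs]
  | cons a rest ih =>
    intro b hb
    simp only [runs] at hb
    cases hr : runs rest with
    | nil => rw [hr] at hb; simp at hb; simp [hb]
    | cons be rs =>
      obtain ⟨b1, e1⟩ := be
      rw [hr] at hb
      by_cases hab : a = b1
      · simp only [hab, if_true] at hb
        rcases List.mem_cons.mp hb with h | h
        · subst h; simp
        · exact ih b (by rw [hr]; exact List.mem_cons_of_mem _ h)
      · simp only [hab, if_false] at hb
        rcases List.mem_cons.mp hb with h | h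
        · subst h; simp
        · exact ih b (by rw [hr]; exact h)

lemma expand_runs : ∀ w : List ℕ, expand (runs w) = w := by
  intro w
  induction w with
  | nil => rfl
  | cons a rest ih =>
    simp only [runs]
    cases hr : runs rest with
    | nil =>
      have hrest : rest = [] := by rw [← ih, hr]; rfl
      subst hrest
      rfl
    | cons be rs =>
      obtain ⟨b, e⟩ := be
      rw [hr] at ih
      by_cases hab : a = b
      · simp only [hab, if_true]
        rw [expand_cons] at ih ⊢
        rw [List.replicate_succ, List.cons_append, ih]
      · simp only [hab, if_false]
        rw [expand_cons, List.replicate_succ]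
        simp [ih]

lemma red_blocks (C : PartitionCategory)
    (h4 : (⟨0, 4, fourBlock⟩ : Σ k l : ℕ, Partition k l) ∈ C.mem) :
    ∀ bs : List (ℕ × ℕ), (∀ b ∈ bs, 1 ≤ b.2) → ∀ pre : List ℕ,
    ((⟨0, _, ofList (pre ++ expand bs)⟩ : Σ k l : ℕ, Partition k l) ∈ C.mem ↔
      (⟨0, _, ofList (pre ++ expand (bs.map fun be => (be.1, if Odd be.2 then 1 else 2)))⟩ :
        Σ k l : ℕ, Partition k l) ∈ C.mem) := by
  intro bs
  induction bs with
  | nil => intro _ pre; exact Iff.rfl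
  | cons b bs ih =>
    obtain ⟨a, e⟩ := b
    intro hpos pre
    have he : 1 ≤ e := hpos (a, e) (by simp)
    have h1 : pre ++ expand ((a, e) :: bs) = pre ++ List.replicate e a ++ expand bs := by
      rw [expand_cons]; simp
    have h3 : pre ++ List.replicate (if Odd e then 1 else 2) a ++
        expand (bs.map fun be => (be.1, if Odd be.2 then 1 else 2)) =
        pre ++ expand (((a, e) :: bs).map fun be => (be.1, if Odd be.2 then 1 else 2)) := by
      rw [List.map_cons, expand_cons]; simp
    rw [mem_of_list_eq C h1, red_run C h4 e he pre (expand bs) a,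
      mem_of_list_eq C (by rfl :
        (pre ++ List.replicate (if Odd e then 1 else 2) a ++ expand bs) =
        ((pre ++ List.replicate (if Odd e then 1 else 2) a) ++ expand bs)),
      ih (fun b hb => hpos b (List.mem_cons_of_mem _ hb)) (pre ++ List.replicate (if Odd e then 1 else 2) a),
      mem_of_list_eq C h3]

end Words

theorem statement6 (C : PartitionCategory)
    (h4 : (⟨0, 4, fourBlock⟩ : Σ k l : ℕ, Partition k l) ∈ C.mem)
    (w : List ℕ) :
    (⟨0, _, ofList w⟩ : Σ k l : ℕ, Partition k l) ∈ C.mem ↔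
      (⟨0, _, ofList (sdForm w)⟩ : Σ k l : ℕ, Partition k l) ∈ C.mem := by
  rw [mem_of_list_eq C (expand_runs w).symm]
  exact red_blocks C h4 (runs w) (runs_pos w) []

end EasyQG
end
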